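/- arXiv:1102.5228 — 11 statements merged into one kernel-verified Lean document; each statement's English description precedes it below -/
import Mathlib

section
/- Let d, m be positive integers, let E denote the m×m matrix all of whose entries are 1, and let C : ℝ^d × ℝ^d → Matrix (Fin m) (Fin m) ℂ satisfy C(x,y) = conjugate transpose of C(y,x) for all x,y. Then C is an m-variate positive definite function on ℝ^d if and only if for every r > 0 the function (x,y) ↦ exp*(r C(x,y)) − E, where exp* denotes the componentwise (entrywise) exponential, is an m-variate positive definite function on ℝ^d. -/
open scoped Matrix BigOperators ComplexOrder

/-!
Testing `C` on points `x₁, …, xₙ` amounts to positive semidefiniteness of the block Gram matrix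
`G = (C(x_p, x_q))_{p,q}`, and the Gram matrix of `exp*(rC) − E` is `exp*(rG) − E`. By the Schur
product theorem every entrywise power `G^{∘k}` of a positive semidefinite `G` is positive
semidefinite, hence so is `exp*(rG) − E = ∑_{k ≥ 1} (r^k / k!) G^{∘k}`. Conversely,
`G = lim_{r → 0⁺} r⁻¹ (exp*(rG) − E)` and positive semidefinite matrices form a closed cone.
-/

open scoped Topology Nat
open Filter

namespace Matrix

variable {ι : Type*}

theorem isClosed_setOf_posSemidef [Fintype ι] {𝕜 : Type*} [RCLike 𝕜] :
    IsClosed {A : Matrix ι ι 𝕜 | A.PosSemidef} := by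
  simp only [posSemidef_iff_dotProduct_mulVec, Set.ofPred_and, Set.ofPred_forall, IsHermitian]
  exact (isClosed_eq continuous_id.matrix_conjTranspose continuous_id).inter <|
    isClosed_iInter fun x => isClosed_le continuous_const <|
      continuous_const.dotProduct (continuous_id.matrix_mulVec continuous_const)

theorem PosSemidef.map_pow_succ {𝕜 : Type*} [RCLike 𝕜] {A : Matrix ι ι 𝕜} (hA : A.PosSemidef)
    (k : ℕ) : (A.map (· ^ (k + 1))).PosSemidef := by
  induction k with
  | zero => simpa using hA
  | succ k ih =>
    have hsucc : A.map (· ^ (k + 2)) = A ⊙ A.map (· ^ (k + 1)) := by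
      ext i j
      simp [pow_succ']
    rw [hsucc]
    exact hA.hadamard ih

theorem conjTranspose_map_exp_sub_one {κ : Type*} (A : Matrix ι κ ℂ) :
    (A.map fun z => Complex.exp z - 1)ᴴ = Aᴴ.map fun z => Complex.exp z - 1 :=
  (conjTranspose_map _ fun z => by simp [← Complex.exp_conj]).symm

theorem hasSum_map_exp_sub_one (A : Matrix ι ι ℂ) :
    HasSum (fun k : ℕ => ((k + 1)! : ℝ)⁻¹ • A.map (· ^ (k + 1)))
      (A.map fun z => Complex.exp z - 1) := by
  refine Pi.hasSum.2 fun i => Pi.hasSum.2 fun j => ?_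
  have h := (hasSum_nat_add_iff' 1).2 (NormedSpace.expSeries_div_hasSum_exp (A i j))
  simpa [← Complex.exp_eq_exp_ℂ, div_eq_inv_mul, Complex.real_smul] using h

theorem PosSemidef.map_exp_sub_one [Fintype ι] {A : Matrix ι ι ℂ} (hA : A.PosSemidef) :
    (A.map fun z => Complex.exp z - 1).PosSemidef :=
  isClosed_setOf_posSemidef.mem_of_tendsto (hasSum_map_exp_sub_one A).tendsto_sum_nat <|
    Eventually.of_forall fun _ =>
      posSemidef_sum _ fun k _ => (hA.map_pow_succ k).smul (by positivity)

theorem tendsto_inv_smul_map_exp_smul_sub_one (A : Matrix ι ι ℂ) :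
    Tendsto (fun r : ℝ => r⁻¹ • (r • A).map fun z => Complex.exp z - 1) (𝓝[≠] 0) (𝓝 A) := by
  refine tendsto_pi_nhds.2 fun i => tendsto_pi_nhds.2 fun j => ?_
  have h : HasDerivAt (fun r : ℝ => Complex.exp (r • A i j)) (A i j) 0 := by
    simpa using ((hasDerivAt_id (0 : ℝ)).smul_const (A i j)).cexp
  refine (hasDerivAt_iff_tendsto_slope.1 h).congr fun r => ?_
  simp [slope_def_module]

theorem posSemidef_iff_forall_posSemidef_map_exp_smul_sub_one [Fintype ι] {A : Matrix ι ι ℂ} :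
    A.PosSemidef ↔ ∀ r : ℝ, 0 < r → ((r • A).map fun z => Complex.exp z - 1).PosSemidef := by
  refine ⟨fun hA r hr => (hA.smul hr.le).map_exp_sub_one, fun h => ?_⟩
  refine isClosed_setOf_posSemidef.mem_of_tendsto
    ((tendsto_inv_smul_map_exp_smul_sub_one A).mono_left (nhdsGT_le_nhdsNE 0)) ?_
  filter_upwards [self_mem_nhdsWithin] with r hr
  exact (h r hr).smul (inv_nonneg.2 (le_of_lt hr))

end Matrix

/-- An `m`-variate positive definite function (cross covariance function) on `ℝ^d`. -/
def IsCrossPosDef (d m : ℕ) (C : (Fin d → ℝ) → (Fin d → ℝ) → Matrix (Fin m) (Fin m) ℂ) : Prop :=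
  (∀ x y, C x y = (C y x)ᴴ) ∧
  ∀ (n : ℕ) (x : Fin n → (Fin d → ℝ)) (a : Fin n → (Fin m → ℂ)),
    0 ≤ ∑ p, ∑ q, a p ⬝ᵥ (C (x p) (x q)).mulVec (star (a q))

section CrossGram

open Matrix

variable {X ι κ R : Type*}

def crossGram (C : X → X → Matrix κ κ R) (x : ι → X) : Matrix (ι × κ) (ι × κ) R :=
  Matrix.of fun i j => C (x i.1) (x j.1) i.2 j.2

@[simp]
theorem crossGram_map {S : Type*} (C : X → X → Matrix κ κ R) (f : R → S) (x : ι → X) :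
    crossGram (fun y z => (C y z).map f) x = (crossGram C x).map f :=
  rfl

@[simp]
theorem crossGram_smul {α : Type*} [SMul α R] (C : X → X → Matrix κ κ R) (r : α) (x : ι → X) :
    crossGram (fun y z => r • C y z) x = r • crossGram C x :=
  rfl

theorem isHermitian_crossGram [InvolutiveStar R] {C : X → X → Matrix κ κ R}
    (hC : ∀ y z, C y z = (C z y)ᴴ) (x : ι → X) : (crossGram C x).IsHermitian := by
  ext i j
  simp [crossGram, hC (x j.1) (x i.1)]

theorem star_dotProduct_crossGram_mulVec [Fintype ι] [Fintype κ] [NonUnitalSemiring R] [Star R]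
    (C : X → X → Matrix κ κ R) (x : ι → X) (v : ι → κ → R) :
    star (Function.uncurry v) ⬝ᵥ crossGram C x *ᵥ Function.uncurry v
      = ∑ p, ∑ q, star (v p) ⬝ᵥ C (x p) (x q) *ᵥ v q := by
  simp only [dotProduct, mulVec, crossGram, of_apply, Fintype.sum_prod_type, Finset.mul_sum,
    Function.uncurry_apply_pair, Pi.star_apply]
  exact Finset.sum_congr rfl fun p _ => Finset.sum_comm

theorem isCrossPosDef_iff_of_hermitian {d m : ℕ}
    {C : (Fin d → ℝ) → (Fin d → ℝ) → Matrix (Fin m) (Fin m) ℂ} (hC : ∀ y z, C y z = (C z y)ᴴ) :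
    IsCrossPosDef d m C ↔ ∀ (n : ℕ) (x : Fin n → Fin d → ℝ), (crossGram C x).PosSemidef := by
  rw [IsCrossPosDef, and_iff_right hC]
  refine forall₂_congr fun n x => ?_
  rw [posSemidef_iff_dotProduct_mulVec, and_iff_right (isHermitian_crossGram hC x)]
  constructor
  · intro h w
    rw [← Function.uncurry_curry w, star_dotProduct_crossGram_mulVec]
    simpa using h (star (Function.curry w))
  · intro h a
    simpa [star_dotProduct_crossGram_mulVec] using h (Function.uncurry (star a))

end CrossGram

theorem crossPosDef_iff_starExp_sub_one_general (d m : ℕ)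
    (C : (Fin d → ℝ) → (Fin d → ℝ) → Matrix (Fin m) (Fin m) ℂ)
    (hHerm : ∀ x y, C x y = (C y x)ᴴ)
    (E : Matrix (Fin m) (Fin m) ℂ) (hE : E = Matrix.of fun _ _ => (1 : ℂ)) :
    IsCrossPosDef d m C ↔
      ∀ r : ℝ, 0 < r →
        IsCrossPosDef d m
          (fun x y => (Matrix.of fun j k => Complex.exp (r * C x y j k)) - E) := by
  subst hE
  have hexp (r : ℝ) : (fun x y => (Matrix.of fun j k => Complex.exp (r * C x y j k)) -
      Matrix.of fun _ _ => (1 : ℂ)) = fun x y => (r • C x y).map fun z => Complex.exp z - 1 := by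
    ext
    simp
  have hHerm_exp (r : ℝ) (x y) : (r • C x y).map (fun z => Complex.exp z - 1) =
      ((r • C y x).map fun z => Complex.exp z - 1)ᴴ := by
    rw [Matrix.conjTranspose_map_exp_sub_one, Matrix.conjTranspose_smul, ← hHerm, star_trivial]
  simp_rw [hexp, isCrossPosDef_iff_of_hermitian (hHerm_exp _), isCrossPosDef_iff_of_hermitian hHerm,
    crossGram_map, crossGram_smul]
  constructor
  · intro h r hr n x
    exact Matrix.posSemidef_iff_forall_posSemidef_map_exp_smul_sub_one.1 (h n x) r hr
  · intro h n x
    exact Matrix.posSemidef_iff_forall_posSemidef_map_exp_smul_sub_one.2 fun r hr => h r hr n x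

/-- `C` is an `m`-variate positive definite function on `ℝ^d` iff for every `r > 0` the
componentwise exponential `exp*(rC) − E` (with `E` the all-ones matrix) is one. -/
theorem crossPosDef_iff_starExp_sub_one (d m : ℕ) (hd : 0 < d) (hm : 0 < m)
    (C : (Fin d → ℝ) → (Fin d → ℝ) → Matrix (Fin m) (Fin m) ℂ)
    (hHerm : ∀ x y, C x y = (C y x)ᴴ)
    (E : Matrix (Fin m) (Fin m) ℂ) (hE : E = Matrix.of fun _ _ => (1 : ℂ)) :
    IsCrossPosDef d m C ↔
      ∀ r : ℝ, 0 < r →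
        IsCrossPosDef d m
          (fun x y => (Matrix.of fun j k => Complex.exp (r * C x y j k)) - E) :=
  crossPosDef_iff_starExp_sub_one_general d m C hHerm E hE
end

section
/- Let d, m be positive integers and let C : ℝ^d × ℝ^d → Matrix (Fin m) (Fin m) ℂ satisfy C(x,y) = conjugate transpose of C(y,x) for all x,y. Suppose that for every r > 0 the componentwise exponential (x,y) ↦ exp*(r C(x,y)) is an m-variate positive definite function on ℝ^d. Then for every z ∈ ℝ^d the function C^{(z)}(x,y) = C(z,z) − C(x,z) − C(z,y) + C(x,y) is an m-variate positive definite function on ℝ^d. -/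
/-!
For a family of coefficients with `∑ aₚ = 0`, the function
`r ↦ ∑ₚ ∑_q aₚᵀ exp*(r C(xₚ, x_q)) conj(a_q)` vanishes at `r = 0` (where `exp*` gives the
all-ones matrix), is nonnegative for `r > 0`, and has derivative the quadratic form of `C` at
`r = 0`; so that quadratic form is nonnegative, i.e. `C` is conditionally positive definite.
The quadratic form of `C^{(z)}` at points `xₚ` with coefficients `aₚ` is the quadratic form of
`C` at the points `x₁, …, xₙ, z` with coefficients `a₁, …, aₙ, -∑ aₚ`, which sum to zero.
-/

open scoped Matrix BigOperators ComplexOrder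

open Matrix

theorem HasDerivWithinAt.nonneg_of_forall_lt_le {E : Type*} [NormedAddCommGroup E]
    [NormedSpace ℝ E] [PartialOrder E] [IsOrderedAddMonoid E] [OrderClosedTopology E]
    [PosSMulMono ℝ E]
    {f : ℝ → E} {f' : E} {a : ℝ} (hf : HasDerivWithinAt f f' (Set.Ioi a) a)
    (hle : ∀ t, a < t → f a ≤ f t) : 0 ≤ f' := by
  refine ge_of_tendsto ((hasDerivWithinAt_iff_tendsto_slope' Set.self_notMem_Ioi).1 hf) ?_
  filter_upwards [self_mem_nhdsWithin] with t ht
  rw [slope_def_module]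
  exact smul_nonneg (inv_nonneg.2 (sub_nonneg.2 (le_of_lt ht))) (sub_nonneg.2 (hle t ht))

section

variable {X ι κ : Type*} [Fintype ι] [Fintype κ]

def crossQuadForm (C : X → X → Matrix κ κ ℂ) (x : ι → X) (a : ι → κ → ℂ) : ℂ :=
  ∑ p, ∑ q, a p ⬝ᵥ C (x p) (x q) *ᵥ star (a q)

theorem crossQuadForm_const (M : Matrix κ κ ℂ) (x : ι → X) (a : ι → κ → ℂ) :
    crossQuadForm (fun _ _ => M) x a = (∑ p, a p) ⬝ᵥ M *ᵥ star (∑ q, a q) := by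
  simp only [crossQuadForm, sum_dotProduct, star_sum, mulVec_sum, dotProduct_sum]
  exact Finset.sum_comm

theorem hasDerivAt_crossQuadForm_exp (C : X → X → Matrix κ κ ℂ) (x : ι → X)
    (a : ι → κ → ℂ) :
    HasDerivAt
      (fun t : ℝ => crossQuadForm (fun u v => of fun j k => Complex.exp (t * C u v j k)) x a)
      (crossQuadForm C x a) 0 := by
  unfold crossQuadForm
  simp only [dotProduct, mulVec, of_apply]
  refine HasDerivAt.fun_sum fun p _ => HasDerivAt.fun_sum fun q _ =>
      HasDerivAt.fun_sum fun j _ => HasDerivAt.const_mul _ (HasDerivAt.fun_sum fun k _ => ?_)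
  simpa using
    (((hasDerivAt_id (0 : ℝ)).ofReal_comp.mul_const (C (x p) (x q) j k)).cexp).mul_const
      (star (a q k))

theorem crossQuadForm_nonneg_of_sum_eq_zero (C : X → X → Matrix κ κ ℂ) (x : ι → X)
    {b : ι → κ → ℂ} (hb : ∑ p, b p = 0)
    (hexp : ∀ r : ℝ, 0 < r →
      0 ≤ crossQuadForm (fun u v => of fun j k => Complex.exp (r * C u v j k)) x b) :
    0 ≤ crossQuadForm C x b := by
  refine (hasDerivAt_crossQuadForm_exp C x b).hasDerivWithinAt.nonneg_of_forall_lt_le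
    fun t ht => ?_
  have h_at_zero : crossQuadForm (fun _ _ => of fun _ _ => (1 : ℂ)) x b = 0 := by
    rw [crossQuadForm_const, hb, zero_dotProduct]
  simpa [h_at_zero] using hexp t ht

theorem crossQuadForm_snoc {n : ℕ} (C : X → X → Matrix κ κ ℂ) (z : X) (x : Fin n → X)
    (a : Fin n → κ → ℂ) :
    crossQuadForm C (Fin.snoc x z) (Fin.snoc a (-∑ p, a p)) =
      crossQuadForm (fun u v => C z z - C u z - C z v + C u v) x a := by
  simp only [crossQuadForm, Fin.sum_univ_castSucc, Fin.snoc_castSucc, Fin.snoc_last]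
  simp only [star_neg, star_sum, mulVec_neg, mulVec_sum, dotProduct_neg, neg_dotProduct,
    dotProduct_sum, sum_dotProduct, sub_mulVec, add_mulVec, dotProduct_sub, dotProduct_add,
    Finset.sum_add_distrib, Finset.sum_sub_distrib, Finset.sum_neg_distrib]
  rw [Finset.sum_comm (f := fun p q => a q ⬝ᵥ C z (x p) *ᵥ star (a p)),
    Finset.sum_comm (f := fun p q => a q ⬝ᵥ C z z *ᵥ star (a p))]
  abel

end

theorem crossPosDef_of_starExp_general (d m : ℕ)
    (C : (Fin d → ℝ) → (Fin d → ℝ) → Matrix (Fin m) (Fin m) ℂ)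
    (hHerm : ∀ x y, C x y = (C y x)ᴴ)
    (hexp : ∀ r : ℝ, 0 < r →
      IsCrossPosDef d m (fun x y => Matrix.of fun j k => Complex.exp (r * C x y j k))) :
    ∀ z : Fin d → ℝ,
      IsCrossPosDef d m (fun x y => C z z - C x z - C z y + C x y) := by
  intro z
  refine ⟨fun x y => ?_, fun n x a => ?_⟩
  · dsimp only
    rw [conjTranspose_add, conjTranspose_sub, conjTranspose_sub,
      ← hHerm z z, ← hHerm x z, ← hHerm z y, ← hHerm x y]
    abel
  · change 0 ≤ crossQuadForm (fun u v => C z z - C u z - C z v + C u v) x a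
    rw [← crossQuadForm_snoc]
    exact crossQuadForm_nonneg_of_sum_eq_zero C _ (by simp [Fin.sum_univ_castSucc])
      fun r hr => (hexp r hr).2 _ _ _

/-- If the componentwise exponential `exp*(rC)` is an `m`-variate positive definite
function for every `r > 0`, then `C^{(z)}(x,y) = C(z,z) − C(x,z) − C(z,y) + C(x,y)`
is an `m`-variate positive definite function for every `z ∈ ℝ^d`. -/
theorem crossPosDef_of_starExp (d m : ℕ) (hd : 0 < d) (hm : 0 < m)
    (C : (Fin d → ℝ) → (Fin d → ℝ) → Matrix (Fin m) (Fin m) ℂ)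
    (hHerm : ∀ x y, C x y = (C y x)ᴴ)
    (hexp : ∀ r : ℝ, 0 < r →
      IsCrossPosDef d m (fun x y => Matrix.of fun j k => Complex.exp (r * C x y j k))) :
    ∀ z : Fin d → ℝ,
      IsCrossPosDef d m (fun x y => C z z - C x z - C z y + C x y) :=
  crossPosDef_of_starExp_general d m C hHerm hexp
end

section
/- Let d be a positive integer and let C : ℝ^d × ℝ^d → ℂ satisfy C(x,y) = conj(C(y,x)) for all x,y. Suppose there exists z ∈ ℝ^d such that the function C^{(z)}(x,y) = C(z,z) − C(x,z) − C(z,y) + C(x,y) is a positive definite kernel on ℝ^d. Then for every r > 0 the function (x,y) ↦ exp(r C(x,y)) is a positive definite kernel on ℝ^d. -/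
/-!
Writing `K` for the shifted kernel `C^{(z)}`, one has
`exp (r C(x,y)) = exp (-r C(z,z)) · f(x) · exp (r K(x,y)) · conj f(y)` for `f(x) = exp (r C(x,z))`,
and `C(z,z)` is real. Positive definiteness of kernels is positive semidefiniteness of all their
Gram matrices, which is preserved by nonnegative scaling, by conjugation with a diagonal matrix,
and by the entrywise exponential: the latter is a limit of nonnegative combinations of entrywise
powers, which are positive semidefinite by the Schur product theorem.
-/

open scoped BigOperators ComplexOrder

/-- A (complex) positive definite kernel on `ℝ^d`. -/
def IsPDKernel (d : ℕ) (K : (Fin d → ℝ) → (Fin d → ℝ) → ℂ) : Prop :=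
  (∀ x y, K x y = starRingEnd ℂ (K y x)) ∧
  ∀ (n : ℕ) (x : Fin n → (Fin d → ℝ)) (a : Fin n → ℂ),
    0 ≤ ∑ p, ∑ q, a p * K (x p) (x q) * starRingEnd ℂ (a q)

open Matrix ComplexConjugate
open scoped Nat

namespace Matrix

variable {ι 𝕜 : Type*} [Fintype ι] [RCLike 𝕜]

theorem PosSemidef.map_pow {A : Matrix ι ι 𝕜} (hA : A.PosSemidef) (k : ℕ) :
    (A.map (· ^ k)).PosSemidef := by
  induction k with
  | zero =>
    convert posSemidef_vecMulVec_self_star (1 : ι → 𝕜) using 1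
    ext i j
    simp [vecMulVec]
  | succ k ih =>
    convert ih.hadamard hA using 1
    ext i j
    simp [pow_succ]

theorem PosSemidef.map_exp {A : Matrix ι ι ℂ} (hA : A.PosSemidef) :
    (A.map Complex.exp).PosSemidef := by
  refine .of_dotProduct_mulVec_nonneg (hA.isHermitian.map _ Complex.exp_conj) fun v => ?_
  have hterm (k : ℕ) : 0 ≤ star v ⬝ᵥ (((k ! : ℂ)⁻¹ • A.map (· ^ k)) *ᵥ v) :=
    ((hA.map_pow k).smul (by positivity)).dotProduct_mulVec_nonneg v
  have hsum : HasSum (fun k : ℕ => star v ⬝ᵥ (((k ! : ℂ)⁻¹ • A.map (· ^ k)) *ᵥ v))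
      (star v ⬝ᵥ (A.map Complex.exp *ᵥ v)) := by
    simp only [dotProduct, mulVec, smul_apply, map_apply, smul_eq_mul, Complex.exp_eq_exp_ℂ]
    refine hasSum_sum fun i _ => (hasSum_sum fun j _ => ?_).mul_left _
    simpa [div_eq_inv_mul] using (NormedSpace.expSeries_div_hasSum_exp (A i j)).mul_right (v j)
  exact hsum.nonneg hterm

end Matrix

theorem sum_mul_mul_conj_eq_dotProduct_mulVec {ι α : Type*} [Fintype ι] (K : α → α → ℂ)
    (x : ι → α) (a : ι → ℂ) :
    ∑ p, ∑ q, a p * K (x p) (x q) * conj (a q) =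
      a ⬝ᵥ ((of fun p q => K (x p) (x q)) *ᵥ star a) := by
  simp [dotProduct, mulVec, Finset.mul_sum, mul_assoc]

theorem isPDKernel_iff_posSemidef {d : ℕ} {K : (Fin d → ℝ) → (Fin d → ℝ) → ℂ} :
    IsPDKernel d K ↔
      ∀ (n : ℕ) (x : Fin n → Fin d → ℝ), (of fun p q => K (x p) (x q)).PosSemidef := by
  constructor
  · rintro ⟨hHerm, hpos⟩ n x
    refine .of_dotProduct_mulVec_nonneg ?_ fun b => ?_
    · ext p q
      simp [hHerm (x p) (x q)]
    · simpa only [sum_mul_mul_conj_eq_dotProduct_mulVec, star_star] using hpos n x (star b)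
  · intro h
    refine ⟨fun x y => ?_, fun n x a => ?_⟩
    · simpa using ((h 2 ![x, y]).isHermitian.apply 0 1).symm
    · simpa only [sum_mul_mul_conj_eq_dotProduct_mulVec, star_star] using
        (h n x).dotProduct_mulVec_nonneg (star a)

namespace IsPDKernel

variable {d : ℕ} {K : (Fin d → ℝ) → (Fin d → ℝ) → ℂ}

theorem real_mul (hK : IsPDKernel d K) {c : ℝ} (hc : 0 ≤ c) :
    IsPDKernel d fun x y => c * K x y := by
  rw [isPDKernel_iff_posSemidef] at hK ⊢
  intro n x
  convert (hK n x).smul hc using 1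
  ext p q
  simp

theorem exp (hK : IsPDKernel d K) : IsPDKernel d fun x y => Complex.exp (K x y) := by
  rw [isPDKernel_iff_posSemidef] at hK ⊢
  exact fun n x => (hK n x).map_exp

theorem mul_mul_conj (hK : IsPDKernel d K) (f : (Fin d → ℝ) → ℂ) :
    IsPDKernel d fun x y => f x * K x y * conj (f y) := by
  rw [isPDKernel_iff_posSemidef] at hK ⊢
  intro n x
  convert (hK n x).mul_mul_conjTranspose_same (diagonal (f ∘ x)) using 1
  ext p q
  simp [diagonal_mul, mul_diagonal]

end IsPDKernel

theorem exp_pdKernel_of_shifted_general (d : ℕ)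
    (C : (Fin d → ℝ) → (Fin d → ℝ) → ℂ)
    (hHerm : ∀ x y, C x y = starRingEnd ℂ (C y x))
    (hz : ∃ z : Fin d → ℝ,
      IsPDKernel d (fun x y => C z z - C x z - C z y + C x y)) :
    ∀ r : ℝ, 0 < r → IsPDKernel d (fun x y => Complex.exp (r * C x y)) := by
  intro r hr
  obtain ⟨z, hK⟩ := hz
  have hzz : ((C z z).re : ℂ) = C z z := Complex.conj_eq_iff_re.mp (hHerm z z).symm
  have hfactor : (fun x y => Complex.exp (r * C x y)) = fun x y =>
      (Real.exp (-(r * (C z z).re)) : ℂ) * (Complex.exp (r * C x z) *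
        Complex.exp (r * (C z z - C x z - C z y + C x y)) * conj (Complex.exp (r * C y z))) := by
    funext x y
    rw [← Complex.exp_conj, map_mul, Complex.conj_ofReal, ← hHerm, Complex.ofReal_exp,
      ← Complex.exp_add, ← Complex.exp_add, ← Complex.exp_add]
    push_cast
    rw [hzz]
    ring_nf
  rw [hfactor]
  exact ((hK.real_mul hr.le).exp.mul_mul_conj _).real_mul (Real.exp_pos _).le

/-- If `C^{(z)}(x,y) = C(z,z) − C(x,z) − C(z,y) + C(x,y)` is a positive definite kernel
for some `z`, then `exp(rC)` is a positive definite kernel for every `r > 0`. -/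
theorem exp_pdKernel_of_shifted (d : ℕ) (hd : 0 < d)
    (C : (Fin d → ℝ) → (Fin d → ℝ) → ℂ)
    (hHerm : ∀ x y, C x y = starRingEnd ℂ (C y x))
    (hz : ∃ z : Fin d → ℝ,
      IsPDKernel d (fun x y => C z z - C x z - C z y + C x y)) :
    ∀ r : ℝ, 0 < r → IsPDKernel d (fun x y => Complex.exp (r * C x y)) :=
  exp_pdKernel_of_shifted_general d C hHerm hz
end

section
/- Let d be a positive integer, let γ̃ be a variogram on ℝ^d, and let M ∈ Matrix (Fin 2) (Fin 2) ℝ be symmetric with M₁₁ = M₂₂ and M₁₁ > M₁₂. If the map (x,y) ↦ (exp(−M_{jk} · γ̃(x−y)))_{j,k=1,2} is a real 2-variate positive definite function on ℝ^d, then γ̃(h) = 0 for all h ∈ ℝ^d. -/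
open scoped Matrix BigOperators

/-- A variogram on `ℝ^d`: vanishes at the origin, even, nonnegative, and
conditionally negative definite. -/
def IsVariogram (d : ℕ) (γ : (Fin d → ℝ) → ℝ) : Prop :=
  γ 0 = 0 ∧ (∀ h, γ (-h) = γ h) ∧ (∀ h, 0 ≤ γ h) ∧
  ∀ (n : ℕ) (x : Fin n → (Fin d → ℝ)) (a : Fin n → ℝ), (∑ p, a p) = 0 →
    ∑ p, ∑ q, a p * a q * γ (x p - x q) ≤ 0

/-- A real `m`-variate positive definite function on `ℝ^d`. -/
def IsRealCrossPosDef (d m : ℕ)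
    (C : (Fin d → ℝ) → (Fin d → ℝ) → Matrix (Fin m) (Fin m) ℝ) : Prop :=
  (∀ x y, C x y = (C y x)ᵀ) ∧
  ∀ (n : ℕ) (x : Fin n → (Fin d → ℝ)) (a : Fin n → (Fin m → ℝ)),
    0 ≤ ∑ p, ∑ q, a p ⬝ᵥ (C (x p) (x q)).mulVec (a q)

/-!
Test positive definiteness at the two points `h` and `0`, with the coefficient vector
`(1, -1)` at both. Since `γ̃ 0 = 0`, the two diagonal blocks contribute nothing, and the
off-diagonal ones contribute `4 (exp (-M₁₁ γ̃ h) - exp (-M₁₂ γ̃ h))`, which is negative as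
soon as `γ̃ h > 0` because `M₁₂ < M₁₁`.
-/

theorem IsRealCrossPosDef.quadForm_pair_nonneg {d m : ℕ}
    {C : (Fin d → ℝ) → (Fin d → ℝ) → Matrix (Fin m) (Fin m) ℝ}
    (hC : IsRealCrossPosDef d m C) (x y : Fin d → ℝ) (a : Fin m → ℝ) :
    0 ≤ a ⬝ᵥ C x x *ᵥ a + a ⬝ᵥ C x y *ᵥ a + (a ⬝ᵥ C y x *ᵥ a + a ⬝ᵥ C y y *ᵥ a) := by
  simpa [Fin.sum_univ_two] using hC.2 2 ![x, y] ![a, a]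

theorem Matrix.one_neg_one_dotProduct_mulVec_one_neg_one {R : Type*} [CommRing R]
    (A : Matrix (Fin 2) (Fin 2) R) :
    ![1, -1] ⬝ᵥ A *ᵥ ![1, -1] = A 0 0 - A 0 1 - (A 1 0 - A 1 1) := by
  simp only [dotProduct, mulVec, Fin.sum_univ_two, cons_val_zero, cons_val_one, cons_val_fin_one]
  ring

theorem variogram_eq_zero_of_starExp_posDef_general (d : ℕ)
    (γ : (Fin d → ℝ) → ℝ) (hγ : IsVariogram d γ)
    (M : Matrix (Fin 2) (Fin 2) ℝ) (hMsymm : M.IsSymm)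
    (hdiag : M 0 0 = M 1 1) (hlt : M 0 1 < M 0 0)
    (hpd : IsRealCrossPosDef d 2
      (fun x y => Matrix.of fun j k => Real.exp (-(M j k * γ (x - y))))) :
    ∀ h : Fin d → ℝ, γ h = 0 := by
  obtain ⟨hγ0, hγeven, hγnonneg, -⟩ := hγ
  intro h
  refine le_antisymm (not_lt.1 fun hpos => ?_) (hγnonneg h)
  have hexp : Real.exp (-(M 0 0 * γ h)) < Real.exp (-(M 0 1 * γ h)) :=
    Real.exp_lt_exp.2 (neg_lt_neg (mul_lt_mul_of_pos_right hlt hpos))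
  have hquad := hpd.quadForm_pair_nonneg h 0 ![1, -1]
  simp only [Matrix.one_neg_one_dotProduct_mulVec_one_neg_one, Matrix.of_apply, sub_self,
    sub_zero, zero_sub, hγeven, hγ0, mul_zero, hMsymm.apply 0 1, ← hdiag] at hquad
  linarith

/-- If `M` is a symmetric `2×2` matrix with identical diagonal entries and
`M₁₁ > M₁₂`, and the componentwise exponential `exp*(−M γ̃(x−y))` is a real `2`-variate
positive definite function, then the variogram `γ̃` vanishes identically. -/
theorem variogram_eq_zero_of_starExp_posDef (d : ℕ) (hd : 0 < d)
    (γ : (Fin d → ℝ) → ℝ) (hγ : IsVariogram d γ)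
    (M : Matrix (Fin 2) (Fin 2) ℝ) (hMsymm : M.IsSymm)
    (hdiag : M 0 0 = M 1 1) (hlt : M 0 1 < M 0 0)
    (hpd : IsRealCrossPosDef d 2
      (fun x y => Matrix.of fun j k => Real.exp (-(M j k * γ (x - y))))) :
    ∀ h : Fin d → ℝ, γ h = 0 :=
  variogram_eq_zero_of_starExp_posDef_general d γ hγ M hMsymm hdiag hlt hpd
end

section
/- Let d, l, m be positive integers, let F be a finite nonnegative Borel measure on ℝ^l, and let f : ℝ^l × ℝ^d × ℝ^d → Matrix (Fin m) (Fin m) ℂ be such that for all y₁, y₂ ∈ ℝ^d and j,k the map ω ↦ f(ω, y₁, y₂)_{jk} is measurable and F-integrable, and for F-almost every ω ∈ ℝ^l the map (y₁,y₂) ↦ f(ω, y₁, y₂) is an m-variate positive definite function on ℝ^d. Then the function K on (ℝ^l × ℝ^d) × (ℝ^l × ℝ^d) defined componentwise by K((x₁,y₁),(x₂,y₂))_{jk} = ∫_{ℝ^l} exp(−i ⟨x₁ − x₂, ω⟩) f(ω, y₁, y₂)_{jk} dF(ω), where ⟨·,·⟩ is the Euclidean inner product on ℝ^l, is an m-variate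 positive definite function on ℝ^{l+d} = ℝ^l × ℝ^d. -/
open scoped Matrix BigOperators ComplexOrder
open MeasureTheory

/-!
Writing `φ_ω(x) = exp(-i⟨x, ω⟩)`, the integrand is `φ_ω(x₁) conj(φ_ω(x₂)) f(ω, y₁, y₂)`.
For fixed `ω` this kernel is positive definite, since its quadratic form with coefficients
`a_p` is that of `f(ω, ·, ·)` with coefficients `φ_ω(x_p) a_p`. Positive definiteness is
preserved by integrating over `ω`: the quadratic form of the integral is the integral of the
quadratic forms, and the Hermitian symmetry passes through complex conjugation of integrals.
-/

/-- An `m`-variate positive definite function (cross covariance function) on `E`. -/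
def IsCrossPosDefOn {E : Type*} (m : ℕ) (C : E → E → Matrix (Fin m) (Fin m) ℂ) : Prop :=
  (∀ x y, C x y = (C y x)ᴴ) ∧
  ∀ (n : ℕ) (x : Fin n → E) (a : Fin n → (Fin m → ℂ)),
    0 ≤ ∑ p, ∑ q, a p ⬝ᵥ (C (x p) (x q)).mulVec (star (a q))

section Integral

variable {α 𝕜 ι κ : Type*} [MeasurableSpace α] {μ : Measure α} [RCLike 𝕜] [Fintype ι] [Fintype κ]

theorem integrable_dotProduct_mulVec {M : α → Matrix ι κ 𝕜}
    (hM : ∀ j k, Integrable (fun ω => M ω j k) μ) (a : ι → 𝕜) (b : κ → 𝕜) :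
    Integrable (fun ω => a ⬝ᵥ M ω *ᵥ b) μ := by
  simp only [dotProduct, Matrix.mulVec]
  exact integrable_finsetSum _ fun j _ =>
    (integrable_finsetSum _ fun k _ => (hM j k).mul_const _).const_mul _

theorem dotProduct_mulVec_integral {M : α → Matrix ι κ 𝕜}
    (hM : ∀ j k, Integrable (fun ω => M ω j k) μ) (a : ι → 𝕜) (b : κ → 𝕜) :
    a ⬝ᵥ (Matrix.of fun j k => ∫ ω, M ω j k ∂μ) *ᵥ b = ∫ ω, a ⬝ᵥ M ω *ᵥ b ∂μ := by
  simp only [dotProduct, Matrix.mulVec, Matrix.of_apply]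
  rw [integral_finsetSum _ fun j _ =>
    (integrable_finsetSum _ fun k _ => (hM j k).mul_const _).const_mul _]
  refine Finset.sum_congr rfl fun j _ => ?_
  rw [integral_const_mul, integral_finsetSum _ fun k _ => (hM j k).mul_const _]
  simp only [integral_mul_const]

end Integral

namespace IsCrossPosDefOn

variable {E E' : Type*} {m : ℕ} {C : E → E → Matrix (Fin m) (Fin m) ℂ}

theorem comp (hC : IsCrossPosDefOn m C) (g : E' → E) :
    IsCrossPosDefOn m (fun x y => C (g x) (g y)) :=
  ⟨fun x y => hC.1 (g x) (g y), fun n x a => hC.2 n (g ∘ x) a⟩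

theorem smul_mul_star (hC : IsCrossPosDefOn m C) (φ : E → ℂ) :
    IsCrossPosDefOn m (fun x y => (φ x * star (φ y)) • C x y) := by
  refine ⟨fun x y => ?_, fun n x a => ?_⟩
  · rw [Matrix.conjTranspose_smul, star_mul', star_star, mul_comm, ← hC.1]
  · convert hC.2 n x (fun p => φ (x p) • a p) using 3 with p _ q _
    rw [star_smul, Matrix.mulVec_smul, dotProduct_smul, smul_dotProduct, Matrix.smul_mulVec,
      dotProduct_smul, smul_smul, mul_comm]

theorem integral {α : Type*} [MeasurableSpace α] {μ : Measure α}
    {K : α → E → E → Matrix (Fin m) (Fin m) ℂ}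
    (hint : ∀ x y j k, Integrable (fun ω => K ω x y j k) μ)
    (hK : ∀ᵐ ω ∂μ, IsCrossPosDefOn m (K ω)) :
    IsCrossPosDefOn m (fun x y => Matrix.of fun j k => ∫ ω, K ω x y j k ∂μ) := by
  refine ⟨fun x y => ?_, fun n x a => ?_⟩
  · ext j k
    simp only [Matrix.conjTranspose_apply, Matrix.of_apply, Complex.star_def, ← integral_conj]
    refine integral_congr_ae ?_
    filter_upwards [hK] with ω hω
    rw [hω.1 x y, Matrix.conjTranspose_apply, Complex.star_def]
  · simp only [dotProduct_mulVec_integral (hint _ _)]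
    have hQ : ∀ p q, Integrable (fun ω => a p ⬝ᵥ K ω (x p) (x q) *ᵥ star (a q)) μ :=
      fun p q => integrable_dotProduct_mulVec (hint _ _) _ _
    calc 0 ≤ ∫ ω, ∑ p, ∑ q, a p ⬝ᵥ K ω (x p) (x q) *ᵥ star (a q) ∂μ :=
          integral_nonneg_of_ae (hK.mono fun ω hω => hω.2 n x a)
      _ = _ := by
          rw [integral_finsetSum _ fun p _ => integrable_finsetSum _ fun q _ => hQ p q]
          simp_rw [integral_finsetSum _ fun q _ => hQ _ q]

end IsCrossPosDefOn

noncomputable def fourierPhase {l : ℕ} (ω x : Fin l → ℝ) : ℂ :=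
  Complex.exp (-Complex.I * (∑ i, x i * ω i : ℝ))

theorem norm_fourierPhase {l : ℕ} (ω x : Fin l → ℝ) : ‖fourierPhase ω x‖ = 1 := by
  simp [fourierPhase, Complex.norm_exp]

@[fun_prop]
theorem measurable_fourierPhase {l : ℕ} (x : Fin l → ℝ) :
    Measurable fun ω => fourierPhase ω x := by
  unfold fourierPhase
  fun_prop

theorem fourierPhase_mul_star {l : ℕ} (ω x y : Fin l → ℝ) :
    fourierPhase ω x * star (fourierPhase ω y) =
      Complex.exp (-Complex.I * (∑ i, ((x i - y i) * ω i) : ℝ)) := by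
  rw [fourierPhase, fourierPhase, Complex.star_def, ← Complex.exp_conj, ← Complex.exp_add]
  congr 1
  simp only [map_mul, map_neg, Complex.conj_I, Complex.conj_ofReal, sub_mul,
    Finset.sum_sub_distrib, Complex.ofReal_sub]
  ring

theorem fourier_mixture_crossPosDef_general (d l m : ℕ)
    (F : Measure (Fin l → ℝ))
    (f : (Fin l → ℝ) → (Fin d → ℝ) → (Fin d → ℝ) → Matrix (Fin m) (Fin m) ℂ)
    (hint : ∀ (y₁ y₂ : Fin d → ℝ) (j k : Fin m),
      Integrable (fun ω => f ω y₁ y₂ j k) F)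
    (hpd : ∀ᵐ ω ∂F, IsCrossPosDefOn m (fun y₁ y₂ => f ω y₁ y₂)) :
    IsCrossPosDefOn m
      (fun p₁ p₂ : (Fin l → ℝ) × (Fin d → ℝ) => Matrix.of fun j k =>
        ∫ ω, Complex.exp (-Complex.I * (∑ i, ((p₁.1 i - p₂.1 i) * ω i) : ℝ)) *
          f ω p₁.2 p₂.2 j k ∂F) := by
  set K := fun (ω : Fin l → ℝ) (p q : (Fin l → ℝ) × (Fin d → ℝ)) =>
    (fourierPhase ω p.1 * star (fourierPhase ω q.1)) • f ω p.2 q.2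
  have hKint : ∀ p q j k, Integrable (fun ω => K ω p q j k) F := fun p q j k => by
    refine (hint p.2 q.2 j k).bdd_mul (c := 1) ?_ (ae_of_all _ fun ω => ?_)
    · fun_prop
    · rw [norm_mul, norm_star, norm_fourierPhase, norm_fourierPhase, one_mul]
  have hKpd : ∀ᵐ ω ∂F, IsCrossPosDefOn m (K ω) := by
    filter_upwards [hpd] with ω hω
    exact (hω.comp Prod.snd).smul_mul_star fun p => fourierPhase ω p.1
  simpa only [K, Matrix.smul_apply, smul_eq_mul, fourierPhase_mul_star] using
    IsCrossPosDefOn.integral hKint hKpd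

/-- If `f(ω,·,·)` is an `m`-variate positive definite function on `ℝ^d` for
`F`-almost every `ω ∈ ℝ^l` (with each entry measurable and `F`-integrable, `F` a
finite measure), then
`K((x₁,y₁),(x₂,y₂))_{jk} = ∫ exp(−i⟨x₁−x₂,ω⟩) f(ω,y₁,y₂)_{jk} dF(ω)`
is an `m`-variate positive definite function on `ℝ^l × ℝ^d`. -/
theorem fourier_mixture_crossPosDef (d l m : ℕ) (hd : 0 < d) (hl : 0 < l) (hm : 0 < m)
    (F : Measure (Fin l → ℝ)) [IsFiniteMeasure F]
    (f : (Fin l → ℝ) → (Fin d → ℝ) → (Fin d → ℝ) → Matrix (Fin m) (Fin m) ℂ)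
    (hmeas : ∀ (y₁ y₂ : Fin d → ℝ) (j k : Fin m),
      Measurable (fun ω => f ω y₁ y₂ j k))
    (hint : ∀ (y₁ y₂ : Fin d → ℝ) (j k : Fin m),
      Integrable (fun ω => f ω y₁ y₂ j k) F)
    (hpd : ∀ᵐ ω ∂F, IsCrossPosDefOn m (fun y₁ y₂ => f ω y₁ y₂)) :
    IsCrossPosDefOn m
      (fun p₁ p₂ : (Fin l → ℝ) × (Fin d → ℝ) => Matrix.of fun j k =>
        ∫ ω, Complex.exp (-Complex.I * (∑ i, ((p₁.1 i - p₂.1 i) * ω i) : ℝ)) *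
          f ω p₁.2 p₂.2 j k ∂F) :=
  fourier_mixture_crossPosDef_general d l m F f hint hpd
end

section
/- Let d be a positive integer, φ a normal scale mixture, and f : ℝ^d → Matrix (Fin d) (Fin d) ℝ a function such that f(x) is symmetric and strictly positive definite (vᵀ f(x) v > 0 for all v ≠ 0) for every x ∈ ℝ^d. Then the function C(x,y) = φ( √( (x − y)ᵀ (f(x) + f(y))⁻¹ (x − y) ) ) / √( det(f(x) + f(y)) ) is a real positive definite kernel on ℝ^d (a covariance function). -/
/-!
For `a ≥ 0` and `S` positive definite, the Gaussian Fourier integral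
`∫ exp(i u⬝w − wᵀSw) dw = π^(d/2) / √(det S) · exp(−uᵀS⁻¹u / 4)`, taken with `S = f x + f y`
and `u = 2√a (x − y)`, writes `exp(−a (x−y)ᵀ(f x + f y)⁻¹(x−y)) / √det(f x + f y)` as `π^(−d/2)`
times the `L²` inner product of `h_x(w) = exp(2i√a x⬝w − wᵀ f(x) w)` and `h_y`. So for each
`a ≥ 0` this is a Gram kernel, hence positive definite, and `C` is its mixture over the measure `F`
representing `φ`.
-/

open scoped Matrix BigOperators
open MeasureTheory

/-- `φ` is a normal scale mixture: `φ(t) = ∫ exp(−a t²) dF(a)` for a finite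
nonnegative Borel measure `F` on `[0,∞)`. -/
def IsNormalScaleMixture (φ : ℝ → ℝ) : Prop :=
  ∃ F : Measure ℝ, IsFiniteMeasure F ∧ F (Set.Iio 0) = 0 ∧
    ∀ t : ℝ, 0 ≤ t → φ t = ∫ a, Real.exp (-(a * t ^ 2)) ∂F

/-- A real positive definite kernel (covariance function) on `ℝ^d`. -/
def IsRealPDKernel (d : ℕ) (K : (Fin d → ℝ) → (Fin d → ℝ) → ℝ) : Prop :=
  (∀ x y, K x y = K y x) ∧
  ∀ (n : ℕ) (x : Fin n → (Fin d → ℝ)) (a : Fin n → ℝ),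
    0 ≤ ∑ p, ∑ q, a p * a q * K (x p) (x q)

open scoped ComplexConjugate Real

section LinearChangeOfVariables

variable {E G : Type*} [NormedAddCommGroup E] [NormedSpace ℝ E] [MeasurableSpace E]
  [BorelSpace E] [FiniteDimensional ℝ E] (μ : Measure E) [μ.IsAddHaarMeasure]
  [NormedAddCommGroup G] {L : E →ₗ[ℝ] E}

theorem LinearMap.measurableEmbedding_of_det_ne_zero (hL : LinearMap.det L ≠ 0) :
    MeasurableEmbedding L :=
  (L.equivOfDetNeZero hL).toContinuousLinearEquiv.toHomeomorph.measurableEmbedding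

theorem integrable_comp_linearMap_iff (hL : LinearMap.det L ≠ 0) {g : E → G} :
    Integrable (fun x => g (L x)) μ ↔ Integrable g μ := by
  rw [← Function.comp_def, ← (L.measurableEmbedding_of_det_ne_zero hL).integrable_map_iff,
    Measure.map_linearMap_addHaar_eq_smul_addHaar μ hL,
    integrable_smul_measure (by simpa using hL) ENNReal.ofReal_ne_top]

theorem integral_comp_linearMap [NormedSpace ℝ G] (hL : LinearMap.det L ≠ 0) (g : E → G) :
    ∫ x, g (L x) ∂μ = |LinearMap.det L|⁻¹ • ∫ x, g x ∂μ := by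
  rw [← (L.measurableEmbedding_of_det_ne_zero hL).integral_map,
    Measure.map_linearMap_addHaar_eq_smul_addHaar μ hL, integral_smul_measure,
    ENNReal.toReal_ofReal (by positivity), abs_inv]

end LinearChangeOfVariables

namespace Matrix

variable {ι : Type*} [Fintype ι] [DecidableEq ι] {S : Matrix ι ι ℝ}

theorem PosDef.exists_isSymm_mul_mul_eq_one (hS : S.PosDef) :
    ∃ N : Matrix ι ι ℝ, N.IsSymm ∧ N * S * N = 1 ∧ N * N = S⁻¹ ∧ N.det = (√S.det)⁻¹ := by
  open scoped MatrixOrder in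
  have hN : (CFC.sqrt S⁻¹).PosSemidef := nonneg_iff_posSemidef.mp (CFC.sqrt_nonneg _)
  refine ⟨CFC.sqrt S⁻¹, hN.isHermitian, ?_, CFC.sqrt_mul_sqrt_self _ hS.inv.posSemidef.nonneg, ?_⟩
  · rw [mul_assoc, mul_eq_one_comm, mul_assoc, CFC.sqrt_mul_sqrt_self _ hS.inv.posSemidef.nonneg,
      mul_nonsing_inv _ hS.det_pos.ne'.isUnit]
  · rw [hS.inv.posSemidef.det_sqrt, det_nonsing_inv, Ring.inverse_eq_inv, RCLike.sqrt_real,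
      Real.sqrt_inv]

open Complex in
theorem cexp_I_mul_dotProduct_sub_dotProduct_mulVec_comp_mulVec {N : Matrix ι ι ℝ}
    (hN : N.IsSymm) (hNSN : N * S * N = 1) (u v : ι → ℝ) :
    cexp (I * ↑(u ⬝ᵥ N *ᵥ v) - ↑((N *ᵥ v) ⬝ᵥ S *ᵥ (N *ᵥ v))) =
      cexp (-1 * ∑ i, (v i : ℂ) ^ 2 + ∑ i, I * (N *ᵥ u) i * v i) := by
  have hlin : u ⬝ᵥ N *ᵥ v = (N *ᵥ u) ⬝ᵥ v := by
    rw [dotProduct_mulVec, ← mulVec_transpose, hN.eq]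
  have hquad : (N *ᵥ v) ⬝ᵥ S *ᵥ (N *ᵥ v) = v ⬝ᵥ v := by
    calc (N *ᵥ v) ⬝ᵥ S *ᵥ (N *ᵥ v) = v ⬝ᵥ (N * S * N) *ᵥ v := by
          rw [← mulVec_mulVec, ← mulVec_mulVec, dotProduct_mulVec v N, ← mulVec_transpose, hN.eq]
      _ = v ⬝ᵥ v := by rw [hNSN, one_mulVec]
  rw [hlin, hquad]
  simp only [dotProduct, ofReal_sum, ofReal_mul, Finset.mul_sum]
  congr 1
  rw [sub_eq_neg_add, ← Finset.sum_neg_distrib]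
  congr 1 <;> exact Finset.sum_congr rfl fun i _ => by ring

open Complex in
theorem PosDef.integrable_cexp_I_mul_dotProduct_sub_dotProduct_mulVec (hS : S.PosDef)
    (u : ι → ℝ) : Integrable fun w : ι → ℝ => cexp (I * ↑(u ⬝ᵥ w) - ↑(w ⬝ᵥ S *ᵥ w)) := by
  obtain ⟨N, hN, hNSN, -, hdet⟩ := hS.exists_isSymm_mul_mul_eq_one
  have hNdet : LinearMap.det (toLin' N) ≠ 0 := by
    rw [LinearMap.det_toLin', hdet]
    exact inv_ne_zero (Real.sqrt_pos.mpr hS.det_pos).ne'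
  rw [← integrable_comp_linearMap_iff volume hNdet]
  simp only [toLin'_apply, cexp_I_mul_dotProduct_sub_dotProduct_mulVec_comp_mulVec hN hNSN]
  exact GaussianFourier.integrable_cexp_neg_mul_sum_add (by simp) _

open Complex in
theorem PosDef.integral_cexp_I_mul_dotProduct_sub_dotProduct_mulVec (hS : S.PosDef)
    (u : ι → ℝ) : ∫ w : ι → ℝ, cexp (I * ↑(u ⬝ᵥ w) - ↑(w ⬝ᵥ S *ᵥ w)) =
      ↑(π ^ (Fintype.card ι / 2 : ℝ) / √S.det * Real.exp (-(u ⬝ᵥ S⁻¹ *ᵥ u) / 4)) := by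
  obtain ⟨N, hN, hNSN, hNN, hdet⟩ := hS.exists_isSymm_mul_mul_eq_one
  have hsqrt : 0 < √S.det := Real.sqrt_pos.mpr hS.det_pos
  have hNdet : LinearMap.det (toLin' N) ≠ 0 := by
    rw [LinearMap.det_toLin', hdet]
    exact inv_ne_zero hsqrt.ne'
  have hcoef : |LinearMap.det (toLin' N)|⁻¹ = √S.det := by
    rw [LinearMap.det_toLin', hdet, abs_inv, abs_of_pos hsqrt, inv_inv]
  have hsum : ∑ i, (I * (N *ᵥ u) i) ^ 2 = -↑(u ⬝ᵥ S⁻¹ *ᵥ u) := by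
    rw [← hNN, ← mulVec_mulVec, dotProduct_mulVec u N, ← mulVec_transpose, hN.eq]
    simp only [dotProduct, ofReal_sum, ofReal_mul, ← Finset.sum_neg_distrib]
    exact Finset.sum_congr rfl fun i _ => by rw [mul_pow, I_sq]; ring
  have hchange := integral_comp_linearMap volume hNdet
    fun w : ι → ℝ => cexp (I * ↑(u ⬝ᵥ w) - ↑(w ⬝ᵥ S *ᵥ w))
  simp only [toLin'_apply, cexp_I_mul_dotProduct_sub_dotProduct_mulVec_comp_mulVec hN hNSN,
    GaussianFourier.integral_cexp_neg_mul_sum_add (b := 1) (by simp), hcoef, hsum] at hchange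
  rw [real_smul, div_one, mul_one] at hchange
  apply mul_left_cancel₀ (ofReal_ne_zero.mpr hsqrt.ne')
  rw [← hchange, ofReal_mul, ofReal_div, ofReal_cpow Real.pi_pos.le, ofReal_exp]
  push_cast
  field_simp [ofReal_ne_zero.mpr hsqrt.ne']

end Matrix

theorem sum_sum_integral_mul_conj {ι α : Type*} [Fintype ι] [MeasurableSpace α] {μ : Measure α}
    (h : ι → α → ℂ) (hint : ∀ p q, Integrable (fun w => h p w * conj (h q w)) μ) :
    ∑ p, ∑ q, ∫ w, h p w * conj (h q w) ∂μ = ↑(∫ w, Complex.normSq (∑ p, h p w) ∂μ) := by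
  simp_rw [← integral_finsetSum _ fun q _ => hint _ q]
  rw [← integral_finsetSum _ fun p _ => integrable_finsetSum _ fun q _ => hint p q,
    ← integral_complex_ofReal]
  congr 1 with w
  rw [← Complex.mul_conj, map_sum, Finset.sum_mul_sum]

theorem isRealPDKernel_integral {α : Type*} [MeasurableSpace α] {F : Measure α} {d : ℕ}
    {K : α → (Fin d → ℝ) → (Fin d → ℝ) → ℝ} (hK : ∀ᵐ a ∂F, IsRealPDKernel d (K a))
    (hint : ∀ x y, Integrable (K · x y) F) :
    IsRealPDKernel d fun x y => ∫ a, K a x y ∂F := by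
  refine ⟨fun x y => integral_congr_ae (hK.mono fun a ha => ha.1 x y), fun n x c => ?_⟩
  simp_rw [← integral_const_mul, ← integral_finsetSum _ fun q _ => (hint _ _).const_mul _]
  rw [← integral_finsetSum _ fun p _ => integrable_finsetSum _ fun q _ => (hint _ _).const_mul _]
  exact integral_nonneg_of_ae (hK.mono fun a ha => ha.2 n x c)

theorem Matrix.sub_dotProduct_mulVec_sub_comm {ι : Type*} [Fintype ι] (M : Matrix ι ι ℝ)
    (x y : ι → ℝ) : (y - x) ⬝ᵥ M *ᵥ (y - x) = (x - y) ⬝ᵥ M *ᵥ (x - y) := by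
  rw [← neg_sub x y, neg_dotProduct, Matrix.mulVec_neg, dotProduct_neg, neg_neg]

open Complex in
theorem isRealPDKernel_exp_neg_mul_div_sqrt_det {d : ℕ}
    {f : (Fin d → ℝ) → Matrix (Fin d) (Fin d) ℝ} (hf : ∀ x, (f x).PosDef) {a : ℝ} (ha : 0 ≤ a) :
    IsRealPDKernel d fun x y =>
      Real.exp (-(a * ((x - y) ⬝ᵥ (f x + f y)⁻¹ *ᵥ (x - y)))) / √(f x + f y).det := by
  refine ⟨fun x y => by dsimp only; rw [add_comm (f y), Matrix.sub_dotProduct_mulVec_sub_comm],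
    fun n x c => ?_⟩
  obtain ⟨r, hr⟩ : ∃ r : ℝ, r * r = 4 * a :=
    ⟨2 * √a, by rw [mul_mul_mul_comm, Real.mul_self_sqrt ha]; ring⟩
  let h : Fin n → (Fin d → ℝ) → ℂ := fun p w =>
    c p * cexp (I * ↑((r • x p) ⬝ᵥ w) - ↑(w ⬝ᵥ f (x p) *ᵥ w))
  have hprod : ∀ p q, (fun w => h p w * conj (h q w)) = fun w => ↑(c p * c q) *
      cexp (I * ↑((r • (x p - x q)) ⬝ᵥ w) - ↑(w ⬝ᵥ (f (x p) + f (x q)) *ᵥ w)) := by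
    intro p q
    ext w
    simp only [h, map_mul, ← exp_conj, map_sub, conj_I, conj_ofReal]
    rw [mul_mul_mul_comm, ← exp_add, smul_sub, sub_dotProduct, Matrix.add_mulVec, dotProduct_add]
    push_cast
    ring_nf
  have hint : ∀ p q, Integrable fun w => h p w * conj (h q w) := fun p q => by
    rw [hprod]
    exact (((hf _).add (hf _)).integrable_cexp_I_mul_dotProduct_sub_dotProduct_mulVec _).const_mul _
  have hval : ∀ p q, ∫ w, h p w * conj (h q w) = ↑(π ^ (d / 2 : ℝ) * (c p * c q *
      (Real.exp (-(a * ((x p - x q) ⬝ᵥ (f (x p) + f (x q))⁻¹ *ᵥ (x p - x q)))) /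
        √(f (x p) + f (x q)).det))) := fun p q => by
    rw [hprod, integral_const_mul,
      ((hf _).add (hf _)).integral_cexp_I_mul_dotProduct_sub_dotProduct_mulVec, neg_div]
    have hquad : ∀ (v : Fin d → ℝ) (M : Matrix (Fin d) (Fin d) ℝ),
        (r • v) ⬝ᵥ M *ᵥ (r • v) / 4 = a * (v ⬝ᵥ M *ᵥ v) := fun v M => by
      rw [smul_dotProduct, Matrix.mulVec_smul, dotProduct_smul, smul_smul, smul_eq_mul, hr]
      ring
    rw [hquad, Fintype.card_fin]
    push_cast
    ring
  have hgram := sum_sum_integral_mul_conj h hint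
  simp_rw [hval, ← ofReal_sum, ofReal_inj, ← Finset.mul_sum] at hgram
  refine nonneg_of_mul_nonneg_right (a := π ^ (d / 2 : ℝ)) ?_ (by positivity)
  exact hgram ▸ integral_nonneg fun w => Complex.normSq_nonneg _

theorem integrable_exp_neg_mul {F : Measure ℝ} [IsFiniteMeasure F] (hF : ∀ᵐ a ∂F, 0 ≤ a)
    {t : ℝ} (ht : 0 ≤ t) : Integrable (fun a => Real.exp (-(a * t))) F :=
  (integrable_const 1).mono' (by fun_prop) <| hF.mono fun a ha => by
    rw [Real.norm_eq_abs, Real.abs_exp, Real.exp_le_one_iff, neg_nonpos]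
    positivity

theorem stein_class_posDef_general (d : ℕ)
    (φ : ℝ → ℝ) (hφ : IsNormalScaleMixture φ)
    (f : (Fin d → ℝ) → Matrix (Fin d) (Fin d) ℝ)
    (hsymm : ∀ x, (f x).IsSymm)
    (hf : ∀ (x : Fin d → ℝ) (v : Fin d → ℝ), v ≠ 0 → 0 < v ⬝ᵥ (f x).mulVec v) :
    IsRealPDKernel d (fun x y =>
      φ (Real.sqrt ((x - y) ⬝ᵥ ((f x + f y)⁻¹).mulVec (x - y))) /
        Real.sqrt ((f x + f y).det)) := by
  have hPD : ∀ x, (f x).PosDef := fun x =>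
    Matrix.PosDef.of_dotProduct_mulVec_pos (hsymm x) fun v hv => by simpa using hf x v hv
  obtain ⟨F, hF, hF0, hφF⟩ := hφ
  have hF_nonneg : ∀ᵐ a ∂F, 0 ≤ a := ae_iff.mpr (by simp_rw [not_le]; exact hF0)
  have hQ : ∀ x y, 0 ≤ (x - y) ⬝ᵥ (f x + f y)⁻¹ *ᵥ (x - y) := fun x y => by
    simpa using ((hPD x).add (hPD y)).inv.posSemidef.dotProduct_mulVec_nonneg (x - y)
  have hC : (fun x y => φ (√((x - y) ⬝ᵥ (f x + f y)⁻¹ *ᵥ (x - y))) / √(f x + f y).det) =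
      fun x y => ∫ a, Real.exp (-(a * ((x - y) ⬝ᵥ (f x + f y)⁻¹ *ᵥ (x - y)))) /
        √(f x + f y).det ∂F := by
    ext x y
    rw [hφF _ (Real.sqrt_nonneg _), Real.sq_sqrt (hQ x y), integral_div]
  rw [hC]
  exact isRealPDKernel_integral
    (hF_nonneg.mono fun a ha => isRealPDKernel_exp_neg_mul_div_sqrt_det hPD ha)
    fun x y => (integrable_exp_neg_mul hF_nonneg (hQ x y)).div_const _

/-- Stein's construction: if `f(x)` is symmetric and strictly positive definite
for every `x`, then
`C(x,y) = φ(√((x−y)ᵀ (f(x)+f(y))⁻¹ (x−y))) / √det(f(x)+f(y))`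
is a covariance function on `ℝ^d`, for any normal scale mixture `φ`. -/
theorem stein_class_posDef (d : ℕ) (hd : 0 < d)
    (φ : ℝ → ℝ) (hφ : IsNormalScaleMixture φ)
    (f : (Fin d → ℝ) → Matrix (Fin d) (Fin d) ℝ)
    (hsymm : ∀ x, (f x).IsSymm)
    (hf : ∀ (x : Fin d → ℝ) (v : Fin d → ℝ), v ≠ 0 → 0 < v ⬝ᵥ (f x).mulVec v) :
    IsRealPDKernel d (fun x y =>
      φ (Real.sqrt ((x - y) ⬝ᵥ ((f x + f y)⁻¹).mulVec (x - y))) /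
        Real.sqrt ((f x + f y).det)) :=
  stein_class_posDef_general d φ hφ f hsymm hf
end

section
/- Let d be a positive integer and let B₁, B₂, M₁, M₂ ∈ Matrix (Fin d) (Fin d) ℝ be symmetric strictly positive definite matrices such that M₂ − M₁ and B₂⁻¹ − B₁⁻¹ are positive semidefinite. Then for b ∈ ℝ the inequality det(B₁)^{−1/2} · exp(−ωᵀ M₁ ω − ‖ω‖² · ξᵀ B₁⁻¹ ξ) + b · det(B₂)^{−1/2} · exp(−ωᵀ M₂ ω − ‖ω‖² · ξᵀ B₂⁻¹ ξ) ≥ 0 holds for all ω, ξ ∈ ℝ^d if and only if b ≥ −√( det(B₂) / det(B₁) ). -/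
open scoped Matrix BigOperators

/-!
The exponent of the second Gaussian is pointwise at most that of the first, because
`M₂ - M₁` and `B₂⁻¹ - B₁⁻¹` are positive semidefinite. Hence the mixture is bounded below by
`exp(second exponent) · (det(B₁)^{-1/2} + b · det(B₂)^{-1/2})`, and both exponents vanish at
`ω = ξ = 0`, so the mixture is nonnegative everywhere iff `det(B₁)^{-1/2} + b · det(B₂)^{-1/2} ≥ 0`.
-/

namespace Matrix

theorem star_dotProduct_mulVec_le_of_posSemidef_sub {n R : Type*} [Fintype n] [Ring R]
    [PartialOrder R] [StarRing R] [IsOrderedAddMonoid R] {A B : Matrix n n R}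
    (h : (A - B).PosSemidef) (x : n → R) : star x ⬝ᵥ (B *ᵥ x) ≤ star x ⬝ᵥ (A *ᵥ x) := by
  have := h.dotProduct_mulVec_nonneg x
  rwa [sub_mulVec, dotProduct_sub, sub_nonneg] at this

end Matrix

theorem one_div_sqrt_add_div_sqrt_nonneg_iff {x y : ℝ} (hx : 0 < x) (hy : 0 < y) (b : ℝ) :
    0 ≤ 1 / Real.sqrt x + b / Real.sqrt y ↔ b ≥ -Real.sqrt (y / x) := by
  have hsx := Real.sqrt_pos.mpr hx
  have hsy := Real.sqrt_pos.mpr hy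
  rw [ge_iff_le, Real.sqrt_div hy.le, ← neg_div, div_le_iff₀ hsx,
    div_add_div _ _ hsx.ne' hsy.ne', le_div_iff₀ (mul_pos hsx hsy), zero_mul]
  constructor <;> intro h <;> linarith

theorem div_add_mul_div_nonneg_of_le {s₁ s₂ u v b : ℝ} (hs₁ : 0 ≤ s₁) (hu : 0 ≤ u)
    (huv : u ≤ v) (hb : 0 ≤ 1 / s₁ + b / s₂) : 0 ≤ v / s₁ + b * u / s₂ :=
  calc 0 ≤ u * (1 / s₁ + b / s₂) := mul_nonneg hu hb
    _ = u / s₁ + b * u / s₂ := by ring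
    _ ≤ v / s₁ + b * u / s₂ := by gcongr

theorem gaussian_exponent_le_of_posSemidef_sub {n : Type*} [Fintype n] {M₁ M₂ C₁ C₂ : Matrix n n ℝ}
    (hM : (M₂ - M₁).PosSemidef) (hC : (C₂ - C₁).PosSemidef) (ω ξ : n → ℝ) :
    -(ω ⬝ᵥ M₂ *ᵥ ω) - (∑ i, ω i ^ 2) * (ξ ⬝ᵥ C₂ *ᵥ ξ) ≤
      -(ω ⬝ᵥ M₁ *ᵥ ω) - (∑ i, ω i ^ 2) * (ξ ⬝ᵥ C₁ *ᵥ ξ) := by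
  have hMω := Matrix.star_dotProduct_mulVec_le_of_posSemidef_sub hM ω
  have hCξ := Matrix.star_dotProduct_mulVec_le_of_posSemidef_sub hC ξ
  rw [star_trivial] at hMω hCξ
  have hω : 0 ≤ ∑ i, ω i ^ 2 := Finset.sum_nonneg fun i _ => sq_nonneg (ω i)
  linarith [mul_le_mul_of_nonneg_left hCξ hω]

theorem mixture_nonneg_iff_general (d : ℕ)
    (B₁ B₂ M₁ M₂ : Matrix (Fin d) (Fin d) ℝ)
    (hB₁ : B₁.PosDef) (hB₂ : B₂.PosDef)
    (hM : (M₂ - M₁).PosSemidef) (hB : (B₂⁻¹ - B₁⁻¹).PosSemidef) (b : ℝ) :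
    (∀ ω ξ : Fin d → ℝ,
      0 ≤ Real.exp (-(ω ⬝ᵥ M₁.mulVec ω) - (∑ i, ω i ^ 2) * (ξ ⬝ᵥ (B₁⁻¹).mulVec ξ)) /
            Real.sqrt B₁.det +
          b * Real.exp (-(ω ⬝ᵥ M₂.mulVec ω) - (∑ i, ω i ^ 2) * (ξ ⬝ᵥ (B₂⁻¹).mulVec ξ)) /
            Real.sqrt B₂.det) ↔
      b ≥ -Real.sqrt (B₂.det / B₁.det) := by
  rw [← one_div_sqrt_add_div_sqrt_nonneg_iff hB₁.det_pos hB₂.det_pos]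
  constructor
  · intro h
    simpa using h 0 0
  · intro hb ω ξ
    exact div_add_mul_div_nonneg_of_le (Real.sqrt_nonneg _) (Real.exp_pos _).le
      (Real.exp_le_exp.mpr (gaussian_exponent_le_of_posSemidef_sub hM hB ω ξ)) hb

/-- For symmetric strictly positive definite `B₁, B₂, M₁, M₂` with `M₂ − M₁` and
`B₂⁻¹ − B₁⁻¹` positive semidefinite, the inequality
`det(B₁)^{−1/2} exp(−ωᵀM₁ω − ‖ω‖² ξᵀB₁⁻¹ξ) + b det(B₂)^{−1/2} exp(−ωᵀM₂ω − ‖ω‖² ξᵀB₂⁻¹ξ) ≥ 0`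
holds for all `ω, ξ ∈ ℝ^d` iff `b ≥ −√(det B₂ / det B₁)`. -/
theorem mixture_nonneg_iff (d : ℕ) (hd : 0 < d)
    (B₁ B₂ M₁ M₂ : Matrix (Fin d) (Fin d) ℝ)
    (hB₁ : B₁.PosDef) (hB₂ : B₂.PosDef) (hM₁ : M₁.PosDef) (hM₂ : M₂.PosDef)
    (hM : (M₂ - M₁).PosSemidef) (hB : (B₂⁻¹ - B₁⁻¹).PosSemidef) (b : ℝ) :
    (∀ ω ξ : Fin d → ℝ,
      0 ≤ Real.exp (-(ω ⬝ᵥ M₁.mulVec ω) - (∑ i, ω i ^ 2) * (ξ ⬝ᵥ (B₁⁻¹).mulVec ξ)) /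
            Real.sqrt B₁.det +
          b * Real.exp (-(ω ⬝ᵥ M₂.mulVec ω) - (∑ i, ω i ^ 2) * (ξ ⬝ᵥ (B₂⁻¹).mulVec ξ)) /
            Real.sqrt B₂.det) ↔
      b ≥ -Real.sqrt (B₂.det / B₁.det) :=
  mixture_nonneg_iff_general d B₁ B₂ M₁ M₂ hB₁ hB₂ hM hB b
end

section
/- Let d be a positive integer, h, μ ∈ ℝ^d, u ∈ ℝ, and D ∈ Matrix (Fin d) (Fin d) ℝ symmetric and strictly positive definite. Then ∫_{ℝ^d} exp(−‖h − u·v‖²) · (π^d · det D)^{−1/2} · exp(−(v − μ)ᵀ D⁻¹ (v − μ)) dv = det(I + u² D)^{−1/2} · exp( −(h − u·μ)ᵀ (I + u² D)⁻¹ (h − u·μ) ), where I is the d×d identity matrix and the integral is with respect to Lebesgue measure on ℝ^d. -/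
/-!
Diagonalise `D = U diag(λ) Uᵀ` with `U` orthogonal. The substitution `v = μ + U w` preserves
Lebesgue measure, and with `g = Uᵀ (h - u μ)` it turns `‖h - u v‖²` into `‖g - u w‖²` and the
Gaussian density into a product of one-dimensional densities of variances `λᵢ / 2`. The integral
therefore factors into one-dimensional Gaussian integrals, each evaluated by completing the
square, and the same diagonalisation of `1 + u² D` identifies the product with the right-hand side.
-/

open scoped Matrix BigOperators
open MeasureTheory

namespace Matrix

variable {n α : Type*} [Fintype n] [DecidableEq n]

theorem inv_conj_unitary [CommRing α] [StarRing α] {U : Matrix n n α}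
    (hU : U ∈ unitaryGroup n α) (A : Matrix n n α) :
    (U * A * star U)⁻¹ = U * A⁻¹ * star U := by
  rw [mul_inv_rev, mul_inv_rev, inv_eq_left_inv (Unitary.star_mul_self_of_mem hU),
    inv_eq_left_inv (Unitary.mul_star_self_of_mem hU), Matrix.mul_assoc]

theorem det_conj_unitary [CommRing α] [StarRing α] {U : Matrix n n α}
    (hU : U ∈ unitaryGroup n α) (A : Matrix n n α) :
    det (U * A * star U) = det A := by
  rw [det_mul_right_comm, Unitary.mul_star_self_of_mem hU, Matrix.one_mul]

variable {U : Matrix n n ℝ}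

theorem abs_det_of_mem_unitaryGroup (hU : U ∈ unitaryGroup n ℝ) : |det U| = 1 := by
  rw [← Real.norm_eq_abs]
  exact CStarRing.norm_of_mem_unitary (det_of_mem_unitary hU)

theorem unitary_mulVec_dotProduct_mulVec (hU : U ∈ unitaryGroup n ℝ) (x y : n → ℝ) :
    (U *ᵥ x) ⬝ᵥ (U *ᵥ y) = x ⬝ᵥ y := by
  rw [dotProduct_mulVec, ← mulVec_transpose, mulVec_mulVec,
    ← conjTranspose_eq_transpose_of_trivial, ← star_eq_conjTranspose,
    Unitary.star_mul_self_of_mem hU, one_mulVec]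

theorem dotProduct_conj_unitary_mulVec (hU : U ∈ unitaryGroup n ℝ) (A : Matrix n n ℝ)
    (x : n → ℝ) :
    (U *ᵥ x) ⬝ᵥ ((U * A * star U) *ᵥ (U *ᵥ x)) = x ⬝ᵥ (A *ᵥ x) := by
  rw [mulVec_mulVec, Matrix.mul_assoc _ (star U), Unitary.star_mul_self_of_mem hU,
    Matrix.mul_one, ← mulVec_mulVec, unitary_mulVec_dotProduct_mulVec hU]

theorem measurePreserving_unitary_mulVec (hU : U ∈ unitaryGroup n ℝ) :
    MeasurePreserving (U *ᵥ ·) (volume : Measure (n → ℝ)) volume := by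
  have hdet := abs_det_of_mem_unitaryGroup hU
  refine ⟨(toLin' U).continuous_of_finiteDimensional.measurable, ?_⟩
  have := Real.map_matrix_volume_pi_eq_smul_volume_pi (M := U) (abs_ne_zero.mp (by simp [hdet]))
  rwa [abs_inv, hdet, inv_one, ENNReal.ofReal_one, one_smul] at this

theorem integral_unitary_mulVec {E : Type*} [NormedAddCommGroup E] [NormedSpace ℝ E]
    (hU : U ∈ unitaryGroup n ℝ) (f : (n → ℝ) → E) :
    ∫ x, f (U *ᵥ x) = ∫ x, f x :=
  (measurePreserving_unitary_mulVec hU).integral_comp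
    ((toLin' U).continuous_of_finiteDimensional.measurableEmbedding
      (mulVec_injective_of_det_ne_zero
        (abs_ne_zero.mp (by simp [abs_det_of_mem_unitaryGroup hU])))) f

end Matrix

open Matrix Real

theorem integral_exp_neg_sq_sub_mul_mul_gaussian (g u : ℝ) {l : ℝ} (hl : 0 < l) :
    ∫ t : ℝ, exp (-(g - u * t) ^ 2) * ((√(π * l))⁻¹ * exp (-(l⁻¹ * t ^ 2))) =
      (√(1 + u ^ 2 * l))⁻¹ * exp (-((1 + u ^ 2 * l)⁻¹ * g ^ 2)) := by
  set a := u ^ 2 + l⁻¹ with ha_def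
  have ha : 0 < a := by positivity
  have complete_square : ∀ t, -(g - u * t) ^ 2 + -(l⁻¹ * t ^ 2) =
      -(a * (t - g * u / a) ^ 2) + -((1 + u ^ 2 * l)⁻¹ * g ^ 2) := by
    intro t
    rw [ha_def]
    field_simp
    ring
  have hconst : √(π / a) * (√(π * l))⁻¹ = (√(1 + u ^ 2 * l))⁻¹ := by
    rw [← sqrt_inv, ← sqrt_mul (by positivity), ← sqrt_inv]
    congr 1
    rw [ha_def]
    field_simp
    ring
  simp_rw [mul_left_comm (exp _), ← exp_add, complete_square, exp_add, ← mul_assoc,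
    integral_mul_const, integral_const_mul]
  rw [integral_sub_right_eq_self (fun t => exp (-(a * t ^ 2))), ← hconst]
  simp only [← neg_mul, integral_gaussian]
  ring

section Diagonalization

variable {n : Type*} [Fintype n] [DecidableEq n] {U : Matrix n n ℝ}

theorem dotProduct_inv_conj_diagonal_mulVec (hU : U ∈ unitaryGroup n ℝ) {a : n → ℝ}
    (ha : ∀ i, a i ≠ 0) (x : n → ℝ) :
    (U *ᵥ x) ⬝ᵥ ((U * diagonal a * star U)⁻¹ *ᵥ (U *ᵥ x)) = ∑ i, (a i)⁻¹ * x i ^ 2 := by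
  have hinv : (diagonal a)⁻¹ = diagonal a⁻¹ := by
    refine inv_eq_left_inv ?_
    rw [diagonal_mul_diagonal, ← diagonal_one]
    exact congrArg diagonal (funext fun i => inv_mul_cancel₀ (ha i))
  rw [inv_conj_unitary hU, dotProduct_conj_unitary_mulVec hU, hinv]
  simp only [dotProduct, mulVec_diagonal, Pi.inv_apply]
  exact Finset.sum_congr rfl fun i _ => by ring

theorem one_add_smul_conj_diagonal (hU : U ∈ unitaryGroup n ℝ) (c : ℝ) (a : n → ℝ) :
    1 + c • (U * diagonal a * star U) = U * diagonal (fun i => 1 + c * a i) * star U := by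
  have hdiag : diagonal (fun i => 1 + c * a i) = 1 + c • diagonal a := by
    rw [← diagonal_one, ← diagonal_smul, diagonal_add]
    rfl
  rw [hdiag, Matrix.mul_add, Matrix.add_mul, Matrix.mul_one, Unitary.mul_star_self_of_mem hU,
    Matrix.mul_smul, Matrix.smul_mul]

noncomputable def gaussianDensity (μ : n → ℝ) (D : Matrix n n ℝ) (v : n → ℝ) : ℝ :=
  (√(π ^ Fintype.card n * D.det))⁻¹ * exp (-((v - μ) ⬝ᵥ D⁻¹ *ᵥ (v - μ)))

variable {l : n → ℝ}

theorem gaussianDensity_conj_diagonal_add_mulVec (hU : U ∈ unitaryGroup n ℝ)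
    (hl : ∀ i, 0 < l i) (μ w : n → ℝ) :
    gaussianDensity μ (U * diagonal l * star U) (μ + U *ᵥ w) =
      ∏ i, (√(π * l i))⁻¹ * exp (-((l i)⁻¹ * w i ^ 2)) := by
  have hprod : π ^ Fintype.card n * ∏ i, l i = ∏ i, π * l i := by
    rw [Finset.prod_mul_distrib, Finset.prod_const, Finset.card_univ]
  rw [gaussianDensity, add_sub_cancel_left, dotProduct_inv_conj_diagonal_mulVec hU
    (fun i => (hl i).ne'), det_conj_unitary hU, det_diagonal, hprod,
    sqrt_prod _ fun i _ => mul_nonneg pi_pos.le (hl i).le, ← Finset.prod_inv_distrib,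
    ← Finset.sum_neg_distrib, exp_sum, Finset.prod_mul_distrib]

theorem sum_sq_sub_mul_add_mulVec (hU : U ∈ unitaryGroup n ℝ) {h μ g : n → ℝ} {u : ℝ}
    (hg : U *ᵥ g = h - u • μ) (w : n → ℝ) :
    ∑ i, (h i - u * (μ + U *ᵥ w) i) ^ 2 = ∑ i, (g i - u * w i) ^ 2 := by
  have hrot : h - u • (μ + U *ᵥ w) = U *ᵥ (g - u • w) := by
    rw [mulVec_sub, mulVec_smul, hg, smul_add]
    abel
  have hnorm := unitary_mulVec_dotProduct_mulVec hU (g - u • w) (g - u • w)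
  rw [← hrot] at hnorm
  simpa [dotProduct, sq, mul_add] using hnorm

theorem inv_sqrt_det_mul_exp_conj_diagonal (hU : U ∈ unitaryGroup n ℝ) (hl : ∀ i, 0 < l i)
    {h μ g : n → ℝ} {u : ℝ} (hg : U *ᵥ g = h - u • μ) :
    (√(1 + u ^ 2 • (U * diagonal l * star U)).det)⁻¹ *
        exp (-((h - u • μ) ⬝ᵥ (1 + u ^ 2 • (U * diagonal l * star U))⁻¹ *ᵥ (h - u • μ))) =
      ∏ i, (√(1 + u ^ 2 * l i))⁻¹ * exp (-((1 + u ^ 2 * l i)⁻¹ * g i ^ 2)) := by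
  have hpos : ∀ i, 0 < 1 + u ^ 2 * l i := fun i => by have := hl i; positivity
  rw [one_add_smul_conj_diagonal hU, ← hg, dotProduct_inv_conj_diagonal_mulVec hU
    (fun i => (hpos i).ne'), det_conj_unitary hU, det_diagonal,
    sqrt_prod _ fun i _ => (hpos i).le, ← Finset.prod_inv_distrib, ← Finset.sum_neg_distrib,
    exp_sum, Finset.prod_mul_distrib]

end Diagonalization

theorem integral_exp_neg_sum_sq_sub_mul_mul_gaussianDensity {n : Type*} [Fintype n]
    [DecidableEq n] {D : Matrix n n ℝ} (hD : D.PosDef) (h μ : n → ℝ) (u : ℝ) :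
    ∫ v, exp (-(∑ i, (h i - u * v i) ^ 2)) * gaussianDensity μ D v =
      (√(1 + u ^ 2 • D).det)⁻¹ * exp (-((h - u • μ) ⬝ᵥ (1 + u ^ 2 • D)⁻¹ *ᵥ (h - u • μ))) := by
  obtain ⟨U, hU, l, hl, rfl⟩ : ∃ U ∈ unitaryGroup n ℝ, ∃ l : n → ℝ,
      (∀ i, 0 < l i) ∧ D = U * diagonal l * star U :=
    ⟨_, hD.1.eigenvectorUnitary.2, _, hD.eigenvalues_pos, by simpa using hD.1.spectral_theorem⟩
  obtain ⟨g, hg⟩ : ∃ g, U *ᵥ g = h - u • μ :=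
    ⟨star U *ᵥ (h - u • μ), by rw [mulVec_mulVec, Unitary.mul_star_self_of_mem hU, one_mulVec]⟩
  rw [← integral_add_left_eq_self _ μ, ← integral_unitary_mulVec hU]
  simp_rw [sum_sq_sub_mul_add_mulVec hU hg, gaussianDensity_conj_diagonal_add_mulVec hU hl,
    ← Finset.sum_neg_distrib, exp_sum, ← Finset.prod_mul_distrib]
  rw [integral_fintype_prod_volume_eq_prod
    (fun i t => exp (-(g i - u * t) ^ 2) * ((√(π * l i))⁻¹ * exp (-((l i)⁻¹ * t ^ 2)))),
    inv_sqrt_det_mul_exp_conj_diagonal hU hl hg]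
  exact Finset.prod_congr rfl fun i _ => integral_exp_neg_sq_sub_mul_mul_gaussian _ _ (hl i)

theorem cox_isham_gaussian_integral_general (d : ℕ)
    (h μ : Fin d → ℝ) (u : ℝ) (D : Matrix (Fin d) (Fin d) ℝ) (hD : D.PosDef) :
    ∫ v : Fin d → ℝ,
        Real.exp (-(∑ i, (h i - u * v i) ^ 2)) *
          ((Real.sqrt (Real.pi ^ d * D.det))⁻¹ *
            Real.exp (-((v - μ) ⬝ᵥ (D⁻¹).mulVec (v - μ)))) =
      (Real.sqrt ((1 + u ^ 2 • D).det))⁻¹ *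
        Real.exp (-((h - u • μ) ⬝ᵥ ((1 + u ^ 2 • D)⁻¹).mulVec (h - u • μ))) := by
  simpa [gaussianDensity] using integral_exp_neg_sum_sq_sub_mul_mul_gaussianDensity hD h μ u

/-- Explicit Cox–Isham covariance (Gaussian case):
`∫ exp(−‖h − u v‖²) (π^d det D)^{−1/2} exp(−(v−μ)ᵀ D⁻¹ (v−μ)) dv
  = det(I + u² D)^{−1/2} exp(−(h − uμ)ᵀ (I + u² D)⁻¹ (h − uμ))`. -/
theorem cox_isham_gaussian_integral (d : ℕ) (hd : 0 < d)
    (h μ : Fin d → ℝ) (u : ℝ) (D : Matrix (Fin d) (Fin d) ℝ) (hD : D.PosDef) :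
    ∫ v : Fin d → ℝ,
        Real.exp (-(∑ i, (h i - u * v i) ^ 2)) *
          ((Real.sqrt (Real.pi ^ d * D.det))⁻¹ *
            Real.exp (-((v - μ) ⬝ᵥ (D⁻¹).mulVec (v - μ)))) =
      (Real.sqrt ((1 + u ^ 2 • D).det))⁻¹ *
        Real.exp (-((h - u • μ) ⬝ᵥ ((1 + u ^ 2 • D)⁻¹).mulVec (h - u • μ))) :=
  cox_isham_gaussian_integral_general d h μ u D hD
end

section
/- Let d be a positive integer, μ ∈ ℝ^d, D ∈ Matrix (Fin d) (Fin d) ℝ symmetric strictly positive definite, and φ a normal scale mixture. Define C : ℝ^d × ℝ → ℝ by C(h,u) = det(I + u² D)^{−1/2} · φ( √( (h − u·μ)ᵀ (I + u² D)⁻¹ (h − u·μ) ) ), where I is the d×d identity matrix. Then the kernel K((x,s),(y,t)) = C(x − y, s − t) is a real positive definite kernel on ℝ^d × ℝ, i.e., C is a translation invariant covariance function on ℝ^{d+1}. -/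
open scoped Matrix BigOperators
open MeasureTheory

/-- A real positive definite kernel on a space `E`. -/
def IsRealPDKernelOn {E : Type*} (K : E → E → ℝ) : Prop :=
  (∀ x y, K x y = K y x) ∧
  ∀ (n : ℕ) (x : Fin n → E) (a : Fin n → ℝ),
    0 ≤ ∑ p, ∑ q, a p * a q * K (x p) (x q)

/-!
Writing `φ t = ∫ exp (-a t²) dF(a)`, the model `C` is the `F`-mixture of the kernels
`G_a(h, u) = det(I + u²D)^{-1/2} exp(-a (h - uμ)ᵀ (I + u²D)⁻¹ (h - uμ))`, and positive definite
kernels are stable under mixtures. In an orthonormal eigenbasis of `D` the kernel `G_a` is a product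
of one-dimensional kernels `(1 + u²λ)^{-1/2} exp(-a w² / (1 + u²λ))`, and products of positive
definite kernels are positive definite (Schur). For `a > 0` the one-dimensional kernel equals
`E exp(-a (w - uZ)²)` with `Z ~ N(0, λ / 2a)`: a mixture over `z` of the Gaussian kernel
`exp(-a (x - y)²)` evaluated at the points `w - u z`. The case `a = 0` is the limit `a → 0⁺`.
-/

open Filter Topology ProbabilityTheory NNReal

theorem Matrix.star_dotProduct_of_mulVec {ι : Type*} [Fintype ι] (M : ι → ι → ℝ) (a : ι → ℝ) :
    star a ⬝ᵥ Matrix.of M *ᵥ a = ∑ p, ∑ q, a p * a q * M p q := by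
  simp only [dotProduct, Matrix.mulVec, Finset.mul_sum, star_trivial, Matrix.of_apply]
  exact Finset.sum_congr rfl fun p _ => Finset.sum_congr rfl fun q _ => by ring

namespace IsRealPDKernelOn

variable {E E' : Type*} {K L : E → E → ℝ}

theorem iff_posSemidef : IsRealPDKernelOn K ↔
    ∀ (n : ℕ) (x : Fin n → E), (Matrix.of fun p q => K (x p) (x q)).PosSemidef := by
  refine ⟨fun hK n x => .of_dotProduct_mulVec_nonneg ?_ fun a => ?_,
    fun h => ⟨fun x y => ?_, fun n x a => ?_⟩⟩
  · ext p q; simp [hK.1]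
  · rw [Matrix.star_dotProduct_of_mulVec]; exact hK.2 n x a
  · simpa using (h 2 ![y, x]).isHermitian.apply 0 1
  · rw [← Matrix.star_dotProduct_of_mulVec]; exact (h n x).dotProduct_mulVec_nonneg a

theorem mul (hK : IsRealPDKernelOn K) (hL : IsRealPDKernelOn L) :
    IsRealPDKernelOn fun x y => K x y * L x y :=
  iff_posSemidef.2 fun n x => (iff_posSemidef.1 hK n x).hadamard (iff_posSemidef.1 hL n x)

theorem comp (hK : IsRealPDKernelOn K) (f : E' → E) : IsRealPDKernelOn fun x y => K (f x) (f y) :=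
  ⟨fun _ _ => hK.1 _ _, fun n x a => hK.2 n (f ∘ x) a⟩

theorem rankOne (f : E → ℝ) : IsRealPDKernelOn fun x y => f x * f y := by
  refine ⟨fun _ _ => mul_comm _ _, fun n x a => ?_⟩
  calc (0 : ℝ) ≤ (∑ p, a p * f (x p)) ^ 2 := sq_nonneg _
    _ = _ := by
      rw [sq, Finset.sum_mul_sum]
      exact Finset.sum_congr rfl fun p _ => Finset.sum_congr rfl fun q _ => by ring

theorem add (hK : IsRealPDKernelOn K) (hL : IsRealPDKernelOn L) :
    IsRealPDKernelOn fun x y => K x y + L x y := by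
  refine ⟨fun x y => by simp only [hK.1 x y, hL.1 x y], fun n x a => ?_⟩
  simp only [mul_add, Finset.sum_add_distrib]
  exact add_nonneg (hK.2 n x a) (hL.2 n x a)

theorem const_mul (hK : IsRealPDKernelOn K) {c : ℝ} (hc : 0 ≤ c) :
    IsRealPDKernelOn fun x y => c * K x y := by
  simpa only [Real.mul_self_sqrt hc] using (rankOne fun _ : E => √c).mul hK

theorem finset_prod {ι : Type*} (s : Finset ι) {K : ι → E → E → ℝ}
    (hK : ∀ i ∈ s, IsRealPDKernelOn (K i)) : IsRealPDKernelOn fun x y => ∏ i ∈ s, K i x y := by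
  classical
  induction s using Finset.induction_on with
  | empty => simpa using rankOne fun _ : E => (1 : ℝ)
  | insert i s hi ih =>
    simp only [Finset.prod_insert hi]
    exact (hK i (s.mem_insert_self i)).mul (ih fun j hj => hK j (Finset.mem_insert_of_mem hj))

theorem finset_sum {ι : Type*} (s : Finset ι) {K : ι → E → E → ℝ}
    (hK : ∀ i ∈ s, IsRealPDKernelOn (K i)) : IsRealPDKernelOn fun x y => ∑ i ∈ s, K i x y := by
  classical
  induction s using Finset.induction_on with
  | empty => simpa using (rankOne fun _ : E => (0 : ℝ))
  | insert i s hi ih =>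
    simp only [Finset.sum_insert hi]
    exact (hK i (s.mem_insert_self i)).add (ih fun j hj => hK j (Finset.mem_insert_of_mem hj))

theorem of_tendsto {ι : Type*} {l : Filter ι} [l.NeBot] {K : ι → E → E → ℝ} {K₀ : E → E → ℝ}
    (hK : ∀ᶠ i in l, IsRealPDKernelOn (K i))
    (hlim : ∀ x y, Tendsto (fun i => K i x y) l (𝓝 (K₀ x y))) :
    IsRealPDKernelOn K₀ := by
  refine ⟨fun x y => tendsto_nhds_unique (hlim x y) ?_, fun n x a => ?_⟩
  · exact (hlim y x).congr' (hK.mono fun i hi => hi.1 y x)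
  · refine ge_of_tendsto (tendsto_finsetSum _ fun p _ => tendsto_finsetSum _ fun q _ =>
      (hlim (x p) (x q)).const_mul (a p * a q)) (hK.mono fun i hi => hi.2 n x a)

theorem of_hasSum {ι : Type*} {K : ι → E → E → ℝ} {K₀ : E → E → ℝ}
    (hK : ∀ i, IsRealPDKernelOn (K i)) (hsum : ∀ x y, HasSum (fun i => K i x y) (K₀ x y)) :
    IsRealPDKernelOn K₀ :=
  of_tendsto (.of_forall fun s => finset_sum s fun i _ => hK i) hsum

theorem pow (hK : IsRealPDKernelOn K) (m : ℕ) : IsRealPDKernelOn fun x y => K x y ^ m := by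
  simpa using finset_prod (Finset.range m) fun _ _ => hK

theorem exp (hK : IsRealPDKernelOn K) : IsRealPDKernelOn fun x y => Real.exp (K x y) := by
  refine of_hasSum (fun m => (hK.pow m).const_mul (by positivity : (0:ℝ) ≤ (m.factorial : ℝ)⁻¹))
    fun x y => ?_
  simpa [Real.exp_eq_exp_ℝ, div_eq_inv_mul] using NormedSpace.expSeries_div_hasSum_exp (K x y)

theorem integral {Z : Type*} [MeasurableSpace Z] {ν : Measure Z} {K : Z → E → E → ℝ}
    (hK : ∀ᵐ z ∂ν, IsRealPDKernelOn (K z)) (hint : ∀ x y, Integrable (fun z => K z x y) ν) :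
    IsRealPDKernelOn fun x y => ∫ z, K z x y ∂ν := by
  refine ⟨fun x y => integral_congr_ae (hK.mono fun z hz => hz.1 x y), fun n x a => ?_⟩
  have hint' : ∀ p q, Integrable (fun z => a p * a q * K z (x p) (x q)) ν :=
    fun p q => (hint _ _).const_mul _
  have hswap : ∑ p, ∑ q, a p * a q * ∫ z, K z (x p) (x q) ∂ν
      = ∫ z, ∑ p, ∑ q, a p * a q * K z (x p) (x q) ∂ν := by
    rw [integral_finsetSum _ fun p _ => integrable_finsetSum _ fun q _ => hint' p q]
    refine Finset.sum_congr rfl fun p _ => ?_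
    rw [integral_finsetSum _ fun q _ => hint' p q]
    simp only [integral_const_mul]
  rw [hswap]
  exact integral_nonneg_of_ae (hK.mono fun z hz => hz.2 n x a)

end IsRealPDKernelOn

theorem isRealPDKernelOn_inner {E : Type*} [NormedAddCommGroup E] [InnerProductSpace ℝ E] :
    IsRealPDKernelOn fun x y : E => inner ℝ x y := by
  refine ⟨fun x y => real_inner_comm y x, fun n x a => ?_⟩
  calc (0 : ℝ) ≤ inner ℝ (∑ p, a p • x p) (∑ q, a q • x q) := real_inner_self_nonneg
    _ = _ := by
      simp only [sum_inner, inner_sum, real_inner_smul_left, real_inner_smul_right]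
      exact Finset.sum_congr rfl fun p _ => Finset.sum_congr rfl fun q _ => by
        rw [real_inner_comm]; ring

theorem isRealPDKernelOn_exp_neg_mul_norm_sub_sq {E : Type*} [NormedAddCommGroup E]
    [InnerProductSpace ℝ E] {a : ℝ} (ha : 0 ≤ a) :
    IsRealPDKernelOn fun x y : E => Real.exp (-(a * ‖x - y‖ ^ 2)) := by
  have hsplit : ∀ x y : E, Real.exp (-(a * ‖x - y‖ ^ 2)) =
      Real.exp (-(a * ‖x‖ ^ 2)) * Real.exp (-(a * ‖y‖ ^ 2)) * Real.exp ((2 * a) * inner ℝ x y) := by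
    intro x y
    rw [← Real.exp_add, ← Real.exp_add, norm_sub_sq_real]
    congr 1
    ring
  simp only [hsplit]
  exact (IsRealPDKernelOn.rankOne _).mul (isRealPDKernelOn_inner.const_mul (by positivity)).exp

theorem integral_exp_neg_mul_sub_mul_sq_gaussianReal {a : ℝ} (ha : 0 ≤ a) (v : ℝ≥0) (w u : ℝ) :
    ∫ z, Real.exp (-(a * (w - u * z) ^ 2)) ∂gaussianReal 0 v =
      (√(1 + 2 * a * u ^ 2 * v))⁻¹ * Real.exp (-(a * ((1 + 2 * a * u ^ 2 * v)⁻¹ * w ^ 2))) := by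
  rcases eq_or_ne v 0 with rfl | hv
  · simp [gaussianReal_zero_var]
  have hv' : (0 : ℝ) < v := NNReal.coe_pos.2 (pos_iff_ne_zero.2 hv)
  set c : ℝ := 1 + 2 * a * u ^ 2 * v with hc_def
  have hc : 0 < c := by positivity
  set b : ℝ := c / (2 * v) with hb_def
  have hb : 0 < b := by positivity
  have hpoint : ∀ z : ℝ, gaussianPDFReal 0 v z • Real.exp (-(a * (w - u * z) ^ 2)) =
      (√(2 * Real.pi * v))⁻¹ * Real.exp (-(a * (c⁻¹ * w ^ 2))) *
        Real.exp (-(b * (z - 2 * a * u * w * v / c) ^ 2)) := by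
    intro z
    rw [gaussianPDFReal_def, smul_eq_mul, mul_assoc, ← Real.exp_add, mul_assoc _ (Real.exp _),
      ← Real.exp_add]
    congr 2
    rw [hb_def, hc_def]
    field_simp
    ring
  have hgauss : ∫ z, Real.exp (-(b * z ^ 2)) = √(Real.pi / b) := by
    simpa only [neg_mul] using integral_gaussian b
  have hsqrt : √(Real.pi / b) = √(2 * Real.pi * v) * (√c)⁻¹ := by
    rw [← Real.sqrt_inv, ← Real.sqrt_mul (by positivity)]
    rw [hb_def]
    field_simp
  rw [integral_gaussianReal_eq_integral_smul hv, integral_congr_ae (.of_forall hpoint),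
    integral_const_mul, integral_sub_right_eq_self (fun z => Real.exp (-(b * z ^ 2))),
    hgauss, hsqrt]
  field_simp

noncomputable def coxIshamFactor (a lam w u : ℝ) : ℝ :=
  (√(1 + u ^ 2 * lam))⁻¹ * Real.exp (-(a * ((1 + u ^ 2 * lam)⁻¹ * w ^ 2)))

theorem continuous_coxIshamFactor (lam w u : ℝ) :
    Continuous fun a => coxIshamFactor a lam w u := by
  unfold coxIshamFactor; fun_prop

theorem abs_coxIshamFactor_le_one {a lam : ℝ} (ha : 0 ≤ a) (hlam : 0 ≤ lam) (w u : ℝ) :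
    |coxIshamFactor a lam w u| ≤ 1 := by
  have h1 : 1 ≤ √(1 + u ^ 2 * lam) := Real.one_le_sqrt.2 (by nlinarith [sq_nonneg u])
  have h2 : Real.exp (-(a * ((1 + u ^ 2 * lam)⁻¹ * w ^ 2))) ≤ 1 :=
    Real.exp_le_one_iff.2 (neg_nonpos.2 (by positivity))
  rw [coxIshamFactor, abs_of_nonneg (by positivity)]
  exact mul_le_one₀ (inv_le_one_of_one_le₀ h1) (by positivity) h2

theorem coxIshamFactor_eq_integral {a lam : ℝ} (ha : 0 < a) (hlam : 0 ≤ lam) (w u : ℝ) :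
    coxIshamFactor a lam w u =
      ∫ z, Real.exp (-(a * (w - u * z) ^ 2)) ∂gaussianReal 0 (lam / (2 * a)).toNNReal := by
  rw [integral_exp_neg_mul_sub_mul_sq_gaussianReal ha.le, Real.coe_toNNReal _ (by positivity),
    show 2 * a * u ^ 2 * (lam / (2 * a)) = u ^ 2 * lam by field_simp, coxIshamFactor]

theorem isRealPDKernelOn_coxIshamFactor {a lam : ℝ} (ha : 0 ≤ a) (hlam : 0 ≤ lam) :
    IsRealPDKernelOn fun p q : ℝ × ℝ => coxIshamFactor a lam (p.1 - q.1) (p.2 - q.2) := by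
  have hpos : ∀ b, 0 < b →
      IsRealPDKernelOn fun p q : ℝ × ℝ => coxIshamFactor b lam (p.1 - q.1) (p.2 - q.2) := by
    intro b hb
    have hdrift : ∀ (p q : ℝ × ℝ) (z : ℝ), (p.1 - q.1 - (p.2 - q.2) * z) ^ 2 =
        ‖(p.1 - p.2 * z) - (q.1 - q.2 * z)‖ ^ 2 := by
      intro p q z
      rw [Real.norm_eq_abs, sq_abs]
      ring
    simp only [coxIshamFactor_eq_integral hb hlam, hdrift]
    have hgauss : ∀ z : ℝ, IsRealPDKernelOn fun p q : ℝ × ℝ =>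
        Real.exp (-(b * ‖(p.1 - p.2 * z) - (q.1 - q.2 * z)‖ ^ 2)) := fun z =>
      (isRealPDKernelOn_exp_neg_mul_norm_sub_sq hb.le).comp fun p : ℝ × ℝ => p.1 - p.2 * z
    refine IsRealPDKernelOn.integral (.of_forall hgauss) fun p q => ?_
    refine .of_bound (by fun_prop) 1 (.of_forall fun z => ?_)
    rw [Real.norm_eq_abs, abs_of_pos (Real.exp_pos _), Real.exp_le_one_iff, neg_nonpos]
    positivity
  rcases ha.lt_or_eq with ha | rfl
  · exact hpos a ha
  exact IsRealPDKernelOn.of_tendsto (l := 𝓝[>] 0) (eventually_mem_nhdsWithin.mono hpos)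
    fun p q => ((continuous_coxIshamFactor _ _ _).tendsto 0).mono_left nhdsWithin_le_nhds

namespace Matrix

variable {n : Type*} [Fintype n] [DecidableEq n]

theorem det_unitary_conj_diagonal {R : Type*} [CommRing R] [StarRing R] (U : unitaryGroup n R)
    (g : n → R) : det ((U : Matrix n n R) * diagonal g * star (U : Matrix n n R)) = ∏ i, g i := by
  rw [det_mul, det_mul, mul_right_comm, ← det_mul, Unitary.mul_star_self_of_mem U.2, det_one,
    one_mul, det_diagonal]

theorem inv_unitary_conj_diagonal {K : Type*} [Field K] [StarRing K] (U : unitaryGroup n K)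
    {g : n → K} (hg : ∀ i, g i ≠ 0) :
    ((U : Matrix n n K) * diagonal g * star (U : Matrix n n K))⁻¹ =
      (U : Matrix n n K) * diagonal g⁻¹ * star (U : Matrix n n K) := by
  refine inv_eq_left_inv ?_
  have hUU := UnitaryGroup.star_mul_self U
  calc (U : Matrix n n K) * diagonal g⁻¹ * star (U : Matrix n n K) * (U * diagonal g * star U)
      = U * (diagonal g⁻¹ * (star (U : Matrix n n K) * U) * diagonal g) * star U := by
        simp only [Matrix.mul_assoc]
    _ = 1 := by
        rw [hUU, Matrix.mul_one, diagonal_mul_diagonal]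
        simp [hg]

theorem dotProduct_unitary_conj_diagonal_mulVec (U : unitaryGroup n ℝ) (g v : n → ℝ) :
    v ⬝ᵥ ((U : Matrix n n ℝ) * diagonal g * star (U : Matrix n n ℝ)) *ᵥ v =
      ∑ i, g i * (star (U : Matrix n n ℝ) *ᵥ v) i ^ 2 := by
  rw [← mulVec_mulVec, ← mulVec_mulVec, dotProduct_mulVec, ← mulVec_transpose]
  simp only [dotProduct, mulVec_diagonal]
  exact Finset.sum_congr rfl fun i _ => by
    rw [star_eq_conjTranspose, conjTranspose_eq_transpose_of_trivial]; ring

theorem IsHermitian.one_add_smul_eq_unitary_conj_diagonal {D : Matrix n n ℝ} (hD : D.IsHermitian)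
    (c : ℝ) :
    1 + c • D = (hD.eigenvectorUnitary : Matrix n n ℝ) *
      diagonal (fun i => 1 + c * hD.eigenvalues i) *
        star (hD.eigenvectorUnitary : Matrix n n ℝ) := by
  have hdiag : diagonal (fun i => 1 + c * hD.eigenvalues i) = 1 + c • diagonal hD.eigenvalues := by
    rw [← diagonal_one, ← diagonal_smul, diagonal_add]; rfl
  conv_lhs => rw [hD.spectral_theorem]
  simp [hdiag, Matrix.mul_add, Matrix.add_mul]

theorem PosSemidef.dotProduct_inv_one_add_smul_mulVec_nonneg {D : Matrix n n ℝ}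
    (hD : D.PosSemidef) {c : ℝ} (hc : 0 ≤ c) (v : n → ℝ) : 0 ≤ v ⬝ᵥ (1 + c • D)⁻¹ *ᵥ v := by
  simpa using (PosDef.one.add_posSemidef (hD.smul hc)).inv.posSemidef.dotProduct_mulVec_nonneg v

end Matrix

section CoxIsham

open Matrix

variable {n : Type*} [Fintype n] [DecidableEq n]

noncomputable def coxIshamGaussian (D : Matrix n n ℝ) (μ : n → ℝ) (a : ℝ) (h : n → ℝ) (u : ℝ) :
    ℝ :=
  (√(1 + u ^ 2 • D).det)⁻¹ * Real.exp (-(a * ((h - u • μ) ⬝ᵥ (1 + u ^ 2 • D)⁻¹ *ᵥ (h - u • μ))))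

theorem continuous_coxIshamGaussian (D : Matrix n n ℝ) (μ h : n → ℝ) (u : ℝ) :
    Continuous fun a => coxIshamGaussian D μ a h u := by
  unfold coxIshamGaussian; fun_prop

variable {D : Matrix n n ℝ}

theorem coxIshamGaussian_eq_prod (hD : D.PosSemidef) (μ : n → ℝ) (a : ℝ) (h : n → ℝ) (u : ℝ) :
    coxIshamGaussian D μ a h u = ∏ i, coxIshamFactor a (hD.1.eigenvalues i)
      ((star (hD.1.eigenvectorUnitary : Matrix n n ℝ) *ᵥ (h - u • μ)) i) u := by
  have hpos : ∀ i, 0 < 1 + u ^ 2 * hD.1.eigenvalues i := fun i => by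
    have := hD.eigenvalues_nonneg i; positivity
  rw [coxIshamGaussian, hD.1.one_add_smul_eq_unitary_conj_diagonal, det_unitary_conj_diagonal,
    inv_unitary_conj_diagonal _ fun i => (hpos i).ne', dotProduct_unitary_conj_diagonal_mulVec,
    Real.sqrt_prod _ fun i _ => (hpos i).le, ← Finset.prod_inv_distrib, Finset.mul_sum,
    ← Finset.sum_neg_distrib, Real.exp_sum, ← Finset.prod_mul_distrib]
  rfl

theorem abs_coxIshamGaussian_le_one (hD : D.PosSemidef) (μ : n → ℝ) {a : ℝ} (ha : 0 ≤ a)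
    (h : n → ℝ) (u : ℝ) : |coxIshamGaussian D μ a h u| ≤ 1 := by
  rw [coxIshamGaussian_eq_prod hD, Finset.abs_prod]
  exact Finset.prod_le_one (fun _ _ => abs_nonneg _) fun i _ =>
    abs_coxIshamFactor_le_one ha (hD.eigenvalues_nonneg i) _ _

theorem isRealPDKernelOn_coxIshamGaussian (hD : D.PosSemidef) (μ : n → ℝ) {a : ℝ} (ha : 0 ≤ a) :
    IsRealPDKernelOn fun p q : (n → ℝ) × ℝ => coxIshamGaussian D μ a (p.1 - q.1) (p.2 - q.2) := by
  have hdiff : ∀ (V : Matrix n n ℝ) (p q : (n → ℝ) × ℝ) i,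
      (V *ᵥ (p.1 - q.1 - (p.2 - q.2) • μ)) i =
        (V *ᵥ (p.1 - p.2 • μ)) i - (V *ᵥ (q.1 - q.2 • μ)) i :=
    fun V p q i => by rw [← Pi.sub_apply, ← mulVec_sub, sub_smul, sub_sub_sub_comm]
  simp only [coxIshamGaussian_eq_prod hD, hdiff]
  exact IsRealPDKernelOn.finset_prod _ fun i _ =>
    (isRealPDKernelOn_coxIshamFactor ha (hD.eigenvalues_nonneg i)).comp fun p : (n → ℝ) × ℝ =>
      ((star (hD.1.eigenvectorUnitary : Matrix n n ℝ) *ᵥ (p.1 - p.2 • μ)) i, p.2)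

end CoxIsham

theorem cox_isham_posDef_general (d : ℕ) (μ : Fin d → ℝ)
    (D : Matrix (Fin d) (Fin d) ℝ) (hD : D.PosDef)
    (φ : ℝ → ℝ) (hφ : IsNormalScaleMixture φ)
    (C : (Fin d → ℝ) → ℝ → ℝ)
    (hC : ∀ (h : Fin d → ℝ) (u : ℝ), C h u =
      (Real.sqrt ((1 + u ^ 2 • D).det))⁻¹ *
        φ (Real.sqrt ((h - u • μ) ⬝ᵥ ((1 + u ^ 2 • D)⁻¹).mulVec (h - u • μ)))) :
    IsRealPDKernelOn (fun p₁ p₂ : (Fin d → ℝ) × ℝ => C (p₁.1 - p₂.1) (p₁.2 - p₂.2)) := by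
  obtain ⟨F, hF, hF0, hφF⟩ := hφ
  have hae : ∀ᵐ a ∂F, 0 ≤ a := by
    rw [ae_iff]; simp only [not_le]; exact hF0
  have hCG : ∀ h u, C h u = ∫ a, coxIshamGaussian D μ a h u ∂F := by
    intro h u
    rw [hC, hφF _ (Real.sqrt_nonneg _), Real.sq_sqrt
      (hD.posSemidef.dotProduct_inv_one_add_smul_mulVec_nonneg (sq_nonneg u) _),
      ← integral_const_mul]
    rfl
  simp only [hCG]
  refine IsRealPDKernelOn.integral
    (hae.mono fun a ha => isRealPDKernelOn_coxIshamGaussian hD.posSemidef μ ha) fun p q => ?_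
  exact .of_bound (continuous_coxIshamGaussian D μ _ _).aestronglyMeasurable 1
    (hae.mono fun a ha => abs_coxIshamGaussian_le_one hD.posSemidef μ ha _ _)

/-- The Cox–Isham model
`C(h,u) = det(I + u² D)^{−1/2} φ(√((h − uμ)ᵀ (I + u² D)⁻¹ (h − uμ)))`
is a translation invariant covariance function on `ℝ^{d+1}` for any normal scale
mixture `φ`. -/
theorem cox_isham_posDef (d : ℕ) (hd : 0 < d) (μ : Fin d → ℝ)
    (D : Matrix (Fin d) (Fin d) ℝ) (hD : D.PosDef)
    (φ : ℝ → ℝ) (hφ : IsNormalScaleMixture φ)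
    (C : (Fin d → ℝ) → ℝ → ℝ)
    (hC : ∀ (h : Fin d → ℝ) (u : ℝ), C h u =
      (Real.sqrt ((1 + u ^ 2 • D).det))⁻¹ *
        φ (Real.sqrt ((h - u • μ) ⬝ᵥ ((1 + u ^ 2 • D)⁻¹).mulVec (h - u • μ)))) :
    IsRealPDKernelOn (fun p₁ p₂ : (Fin d → ℝ) × ℝ => C (p₁.1 - p₂.1) (p₁.2 - p₂.2)) :=
  cox_isham_posDef_general d μ D hD φ hφ C hC
end

section
/- Let d be a positive integer, A ∈ Matrix (Fin d) (Fin d) ℝ symmetric, z, h ∈ ℝ^d, and u ∈ ℝ. Set B = A h hᵀ A and f(v) = vᵀ A v + zᵀ v for v ∈ ℝ^d. Then (2/π)^{d/2} · ∫_{ℝ^d} exp(−‖v‖² − ‖v + h‖²) · exp( −( f(v) − f(v+h) − u )² ) dv = det(I + 2B)^{−1/2} · exp( −( ‖h‖²/2 + (zᵀh + u)² · (1 − 2 hᵀ A (I + 2B)⁻¹ A h) ) ), where I is the d×d identity matrix and the integral is with respect to Lebesgue measure on ℝ^d. -/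
/-!
Completing the square turns the two Gaussian weights into `exp (-‖h‖² / 2) * exp (-2 ‖w‖²)` with
`w = v + h / 2`, and the quadratic part of `f` cancels in `f v - f (v + h)` up to the affine
function `-(2 ⟪A h, w⟫ + zᵀh)`. Rotating `A h` onto a coordinate axis reduces the integral to a
one-dimensional Gaussian integral. On the matrix side `B = (A h)(A h)ᵀ` has rank one, so
`det (I + 2B) = 1 + 2 ‖A h‖²` and `(I + 2B)⁻¹ A h = A h / (1 + 2 ‖A h‖²)`.
-/

open MeasureTheory Matrix Module Real

namespace Matrix

variable {n K : Type*} [Fintype n]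

theorem det_one_add_vecMulVec [DecidableEq n] [CommRing K] (u v : n → K) :
    (1 + vecMulVec u v).det = 1 + v ⬝ᵥ u := by
  rw [vecMulVec_eq Unit, det_one_add_replicateCol_mul_replicateRow]

theorem inv_one_add_vecMulVec_mulVec [DecidableEq n] [Field K] {u v : n → K}
    (huv : 1 + v ⬝ᵥ u ≠ 0) : (1 + vecMulVec u v)⁻¹ *ᵥ u = (1 + v ⬝ᵥ u)⁻¹ • u := by
  have : Invertible (1 + vecMulVec u v) :=
    invertibleOfIsUnitDet _ (by rw [det_one_add_vecMulVec]; exact huv.isUnit)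
  refine inv_mulVec_eq_vec ?_
  rw [mulVec_smul, add_mulVec, one_mulVec, vecMulVec_mulVec, op_smul_eq_smul, smul_add, smul_smul,
    ← add_smul, ← mul_one_add, inv_mul_cancel₀ huv, one_smul]

theorem IsSymm.mul_vecMulVec_self_mul [CommSemiring K] {A : Matrix n n K} (hA : A.IsSymm)
    (h : n → K) : A * vecMulVec h h * A = vecMulVec (A *ᵥ h) (A *ᵥ h) := by
  rw [mul_vecMulVec, vecMulVec_mul, ← mulVec_transpose, hA.eq]

theorem IsSymm.dotProduct_mul_mul_mulVec [CommSemiring K] {A : Matrix n n K} (hA : A.IsSymm)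
    (M : Matrix n n K) (h : n → K) : h ⬝ᵥ (A * M * A) *ᵥ h = A *ᵥ h ⬝ᵥ M *ᵥ (A *ᵥ h) := by
  rw [← mulVec_mulVec, ← mulVec_mulVec, dotProduct_mulVec, ← mulVec_transpose, hA.eq]

theorem IsSymm.add_dotProduct_mulVec_add [CommRing K] {A : Matrix n n K} (hA : A.IsSymm)
    (v h : n → K) :
    (v + h) ⬝ᵥ A *ᵥ (v + h) = v ⬝ᵥ A *ᵥ v + 2 * (A *ᵥ h ⬝ᵥ v) + h ⬝ᵥ A *ᵥ h := by
  have hsymm : h ⬝ᵥ A *ᵥ v = A *ᵥ h ⬝ᵥ v := by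
    rw [dotProduct_mulVec, ← mulVec_transpose, hA.eq]
  simp only [mulVec_add, dotProduct_add, add_dotProduct, hsymm, dotProduct_comm v (A *ᵥ h)]
  ring

end Matrix

theorem sqrt_pow_of_nonneg {x : ℝ} (hx : 0 ≤ x) (n : ℕ) : √(x ^ n) = √x ^ n :=
  (sqrt_eq_iff_mul_self_eq (by positivity) (by positivity)).mpr
    (by rw [← mul_pow, mul_self_sqrt hx])

theorem integral_exp_neg_mul_sq_sub_mul_add_sq {a : ℝ} (ha : 0 < a) (b c : ℝ) :
    ∫ t : ℝ, exp (-a * t ^ 2 - (b * t + c) ^ 2)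
      = √(π / a) * (√(1 + b ^ 2 / a))⁻¹ * exp (-c ^ 2 / (1 + b ^ 2 / a)) := by
  have hp : 0 < 1 + b ^ 2 / a := by positivity
  have hsq : ∀ t, -a * t ^ 2 - (b * t + c) ^ 2
      = -(a * (1 + b ^ 2 / a)) * (t + b * c / (a * (1 + b ^ 2 / a))) ^ 2
        + -c ^ 2 / (1 + b ^ 2 / a) := fun t => by
    field_simp
    ring
  simp_rw [hsq, exp_add, integral_mul_const]
  rw [integral_add_right_eq_self (fun t => exp (-(a * (1 + b ^ 2 / a)) * t ^ 2)),
    integral_gaussian, ← div_div, sqrt_div' _ hp.le, div_eq_mul_inv]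

theorem integral_exp_neg_mul_sum_sq_sub_mul_apply_add_sq {ι : Type*} [Fintype ι] (i₀ : ι) {a : ℝ}
    (ha : 0 < a) (b c : ℝ) :
    ∫ x : ι → ℝ, exp (-a * ∑ i, x i ^ 2 - (b * x i₀ + c) ^ 2)
      = √(π / a) ^ Fintype.card ι * (√(1 + b ^ 2 / a))⁻¹ * exp (-c ^ 2 / (1 + b ^ 2 / a)) := by
  classical
  let F : ι → ℝ → ℝ := fun i t => exp (-a * t ^ 2) * if i = i₀ then exp (-(b * t + c) ^ 2) else 1
  have hF : ∀ x : ι → ℝ, exp (-a * ∑ i, x i ^ 2 - (b * x i₀ + c) ^ 2) = ∏ i, F i (x i) := by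
    intro x
    rw [Finset.prod_mul_distrib, ← exp_sum, Finset.prod_ite_eq' Finset.univ i₀, if_pos
      (Finset.mem_univ i₀), ← exp_add, Finset.mul_sum, sub_eq_add_neg]
  have hFint : ∀ i, ∫ t, F i t
      = √(π / a) * if i = i₀ then (√(1 + b ^ 2 / a))⁻¹ * exp (-c ^ 2 / (1 + b ^ 2 / a)) else 1 := by
    intro i
    split_ifs with hi
    · simp only [F, if_pos hi, ← exp_add, ← sub_eq_add_neg, integral_exp_neg_mul_sq_sub_mul_add_sq ha, mul_assoc]
    · simp only [F, if_neg hi, mul_one, integral_gaussian]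
  simp_rw [hF]
  rw [integral_fintype_prod_volume_eq_prod, Finset.prod_congr rfl fun i _ => hFint i,
    Finset.prod_mul_distrib, Finset.prod_const, Finset.prod_ite_eq' Finset.univ i₀,
    if_pos (Finset.mem_univ i₀), Finset.card_univ, mul_assoc]

section InnerProductSpace

variable {V : Type*} [NormedAddCommGroup V] [InnerProductSpace ℝ V] [FiniteDimensional ℝ V]

theorem exists_orthonormalBasis_apply_eq {ι : Type*} [Fintype ι] (hι : finrank ℝ V = Fintype.card ι)
    (i₀ : ι) {e : V} (he : ‖e‖ = 1) : ∃ b : OrthonormalBasis ι ℝ V, b i₀ = e := by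
  have horth : Orthonormal ℝ (({i₀} : Set ι).domRestrict fun _ => e) :=
    ⟨fun _ => he, fun i j hij => absurd (Subsingleton.elim i j) hij⟩
  obtain ⟨b, hb⟩ := horth.exists_orthonormalBasis_extension_of_card_eq hι
  exact ⟨b, hb i₀ rfl⟩

theorem exists_norm_eq_one_and_eq_norm_smul (hV : 0 < finrank ℝ V) (g : V) :
    ∃ e : V, ‖e‖ = 1 ∧ g = ‖g‖ • e := by
  rcases eq_or_ne g 0 with rfl | hg
  · obtain ⟨x, hx⟩ := finrank_pos_iff_exists_ne_zero.mp hV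
    exact ⟨‖x‖⁻¹ • x, norm_smul_inv_norm hx, by simp⟩
  · exact ⟨‖g‖⁻¹ • g, norm_smul_inv_norm hg, by
      rw [smul_inv_smul₀ (norm_ne_zero_iff.mpr hg)]⟩

variable [MeasurableSpace V] [BorelSpace V]

theorem integral_exp_neg_mul_norm_sq_sub_mul_inner_add_sq {e : V} (he : ‖e‖ = 1) {a : ℝ} (ha : 0 < a)
    (b c : ℝ) :
    ∫ v : V, exp (-a * ‖v‖ ^ 2 - (b * inner ℝ e v + c) ^ 2)
      = √(π / a) ^ finrank ℝ V * (√(1 + b ^ 2 / a))⁻¹ * exp (-c ^ 2 / (1 + b ^ 2 / a)) := by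
  have : Nontrivial V := ⟨⟨e, 0, by rintro rfl; simp at he⟩⟩
  let i₀ : Fin (finrank ℝ V) := ⟨0, finrank_pos⟩
  obtain ⟨B, hB⟩ := exists_orthonormalBasis_apply_eq (by simp) i₀ he
  rw [← B.measurePreserving_repr_symm.integral_comp B.repr.symm.toHomeomorph.measurableEmbedding,
    ← (PiLp.volume_preserving_toLp _).integral_comp (MeasurableEquiv.toLp 2 _).measurableEmbedding]
  simp only [LinearIsometryEquiv.norm_map, EuclideanSpace.real_norm_sq_eq, ← hB,
    ← B.repr_apply_apply, LinearIsometryEquiv.apply_symm_apply, PiLp.toLp_apply]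
  rw [integral_exp_neg_mul_sum_sq_sub_mul_apply_add_sq i₀ ha, Fintype.card_fin]

theorem integral_exp_neg_mul_norm_sq_sub_inner_add_sq (hV : 0 < finrank ℝ V) {a : ℝ} (ha : 0 < a)
    (g : V) (c : ℝ) :
    ∫ v : V, exp (-a * ‖v‖ ^ 2 - (inner ℝ g v + c) ^ 2)
      = √(π / a) ^ finrank ℝ V * (√(1 + ‖g‖ ^ 2 / a))⁻¹ * exp (-c ^ 2 / (1 + ‖g‖ ^ 2 / a)) := by
  obtain ⟨e, he, hge⟩ := exists_norm_eq_one_and_eq_norm_smul hV g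
  have hinner : ∀ v, inner ℝ g v = ‖g‖ * inner ℝ e v := fun v => by
    rw [hge, real_inner_smul_left, norm_smul, he, norm_norm, mul_one]
  simp_rw [hinner, integral_exp_neg_mul_norm_sq_sub_mul_inner_add_sq he ha]

end InnerProductSpace

theorem integral_exp_neg_mul_sum_sq_sub_dotProduct_add_sq {ι : Type*} [Fintype ι] [Nonempty ι]
    {a : ℝ} (ha : 0 < a) (g : ι → ℝ) (c : ℝ) :
    ∫ x : ι → ℝ, exp (-a * ∑ i, x i ^ 2 - (g ⬝ᵥ x + c) ^ 2)
      = √(π / a) ^ Fintype.card ι * (√(1 + g ⬝ᵥ g / a))⁻¹ * exp (-c ^ 2 / (1 + g ⬝ᵥ g / a)) := by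
  have key := integral_exp_neg_mul_norm_sq_sub_inner_add_sq (V := EuclideanSpace ℝ ι)
    (by simp [Fintype.card_pos]) ha (WithLp.toLp 2 g) c
  rw [← (PiLp.volume_preserving_toLp ι).integral_comp
    (MeasurableEquiv.toLp 2 _).measurableEmbedding] at key
  rw [← real_inner_self_eq_norm_sq (WithLp.toLp 2 g), finrank_euclideanSpace] at key
  simpa only [EuclideanSpace.real_norm_sq_eq, EuclideanSpace.inner_toLp_toLp, star_trivial,
    dotProduct_comm _ g, PiLp.toLp_apply] using key

theorem integral_exp_neg_sum_sq_sub_sum_add_sq_mul {ι : Type*} [Fintype ι] (F : (ι → ℝ) → ℝ)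
    (h : ι → ℝ) :
    ∫ v : ι → ℝ, exp (-(∑ i, v i ^ 2) - ∑ i, (v i + h i) ^ 2) * F v
      = exp (-(∑ i, h i ^ 2) / 2) * ∫ w : ι → ℝ, exp (-2 * ∑ i, w i ^ 2) * F (w - (2⁻¹ : ℝ) • h) := by
  rw [← integral_const_mul, ← integral_sub_right_eq_self _ ((2⁻¹ : ℝ) • h)]
  congr 1 with w
  rw [← mul_assoc, ← exp_add]
  congr 2
  simp only [Pi.sub_apply, Pi.smul_apply, smul_eq_mul, Finset.mul_sum, Finset.sum_div,
    ← Finset.sum_neg_distrib, ← Finset.sum_sub_distrib, ← Finset.sum_add_distrib]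
  exact Finset.sum_congr rfl fun i _ => by ring

theorem integral_exp_neg_sum_sq_sub_sum_add_sq_mul_exp_neg_sq_quadratic_sub {d : ℕ} (hd : 0 < d)
    {A : Matrix (Fin d) (Fin d) ℝ} (hA : A.IsSymm) (z h : Fin d → ℝ) (u : ℝ)
    {f : (Fin d → ℝ) → ℝ} (hf : ∀ v, f v = v ⬝ᵥ A *ᵥ v + z ⬝ᵥ v) :
    ∫ v : Fin d → ℝ, exp (-(∑ i, v i ^ 2) - ∑ i, (v i + h i) ^ 2) * exp (-(f v - f (v + h) - u) ^ 2)
      = exp (-(∑ i, h i ^ 2) / 2) * (√(π / 2) ^ d * (√(1 + 2 * (A *ᵥ h ⬝ᵥ A *ᵥ h)))⁻¹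
          * exp (-(z ⬝ᵥ h + u) ^ 2 / (1 + 2 * (A *ᵥ h ⬝ᵥ A *ᵥ h)))) := by
  have : Nonempty (Fin d) := ⟨⟨0, hd⟩⟩
  have hdiff : ∀ w, f (w - (2⁻¹ : ℝ) • h) - f (w - (2⁻¹ : ℝ) • h + h) - u
      = -((2 : ℝ) • A *ᵥ h ⬝ᵥ w + (z ⬝ᵥ h + u)) := by
    intro w
    simp only [hf, hA.add_dotProduct_mulVec_add, dotProduct_comm h (A *ᵥ h), dotProduct_add,
      dotProduct_sub, dotProduct_smul, smul_dotProduct, smul_eq_mul]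
    ring
  rw [integral_exp_neg_sum_sq_sub_sum_add_sq_mul]
  simp_rw [hdiff, neg_sq, ← exp_add, ← sub_eq_add_neg]
  rw [integral_exp_neg_mul_sum_sq_sub_dotProduct_add_sq two_pos, Fintype.card_fin]
  simp only [dotProduct_smul, smul_dotProduct, smul_eq_mul]
  rw [mul_div_cancel_left₀ _ two_ne_zero]

/-- Explicit covariance of the moving-average model (Example 13):
with `f(v) = vᵀ A v + zᵀ v` and `B = A h hᵀ A`,
`(2/π)^{d/2} ∫ exp(−‖v‖² − ‖v+h‖²) exp(−(f(v) − f(v+h) − u)²) dv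
  = det(I + 2B)^{−1/2} exp(−(‖h‖²/2 + (zᵀh + u)² (1 − 2 hᵀ A (I + 2B)⁻¹ A h)))`. -/
theorem moving_average_gaussian_integral (d : ℕ) (hd : 0 < d)
    (A : Matrix (Fin d) (Fin d) ℝ) (hA : A.IsSymm) (z h : Fin d → ℝ) (u : ℝ)
    (B : Matrix (Fin d) (Fin d) ℝ) (hB : B = A * Matrix.vecMulVec h h * A)
    (f : (Fin d → ℝ) → ℝ) (hf : ∀ v, f v = v ⬝ᵥ A.mulVec v + z ⬝ᵥ v) :
    Real.sqrt ((2 / Real.pi) ^ d) *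
        ∫ v : Fin d → ℝ,
          Real.exp (-(∑ i, v i ^ 2) - (∑ i, (v i + h i) ^ 2)) *
            Real.exp (-(f v - f (v + h) - u) ^ 2) =
      (Real.sqrt ((1 + 2 • B).det))⁻¹ *
        Real.exp (-((∑ i, h i ^ 2) / 2 +
          (z ⬝ᵥ h + u) ^ 2 * (1 - 2 * (h ⬝ᵥ (A * (1 + 2 • B)⁻¹ * A).mulVec h)))) := by
  obtain rfl : B = vecMulVec (A *ᵥ h) (A *ᵥ h) := hB.trans (hA.mul_vecMulVec_self_mul h)
  have hs : 0 ≤ A *ᵥ h ⬝ᵥ A *ᵥ h := Finset.sum_nonneg fun i _ => mul_self_nonneg _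
  rw [integral_exp_neg_sum_sq_sub_sum_add_sq_mul_exp_neg_sq_quadratic_sub hd hA z h u hf,
    ← vecMulVec_smul, det_one_add_vecMulVec, hA.dotProduct_mul_mul_mulVec,
    inv_one_add_vecMulVec_mulVec (by rw [smul_dotProduct, nsmul_eq_mul]; positivity)]
  simp only [dotProduct_smul, smul_dotProduct]
  simp only [smul_eq_mul, nsmul_eq_mul, Nat.cast_ofNat]
  generalize A *ᵥ h ⬝ᵥ A *ᵥ h = s at hs ⊢
  have hpi : √((2 / π) ^ d) * √(π / 2) ^ d = 1 := by
    rw [← sqrt_pow_of_nonneg (by positivity), ← sqrt_mul (by positivity), ← mul_pow,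
      div_mul_div_cancel₀ pi_ne_zero, div_self two_ne_zero, one_pow, sqrt_one]
  calc _ = √((2 / π) ^ d) * √(π / 2) ^ d * (√(1 + 2 * s))⁻¹
        * (exp (-(∑ i, h i ^ 2) / 2) * exp (-(z ⬝ᵥ h + u) ^ 2 / (1 + 2 * s))) := by ring
    _ = _ := by
      rw [hpi, one_mul, ← exp_add]
      congr 2
      field_simp
      ring
end

section
/- Let d be a positive integer, S, T ∈ Matrix (Fin d) (Fin d) ℝ symmetric strictly positive definite, M ∈ Matrix (Fin d) (Fin d) ℝ symmetric, h ∈ ℝ^d and c ∈ ℝ. Set m₀ = hᵀ M h, A = S + T + 4 M h hᵀ M, and μ = −A⁻¹ (T + 2(m₀ − c) M) h. Then π^{−d/2} · ∫_{ℝ^d} exp( −wᵀ S w − (w + h)ᵀ T (w + h) − ( wᵀ M w − (w+h)ᵀ M (w+h) + c )² ) dw = det(A)^{−1/2} · exp( −( hᵀ T h + (m₀ − c)² − μᵀ A μ ) ), where the integral is with respect to Lebesgue measure on ℝ^d. -/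
/-!
Expanding `(w + h)ᵀX(w + h)` for the symmetric `T` and `M`, the squared term becomes
`(2 wᵀMh + m₀ - c)²`, so the exponent is the quadratic polynomial `-(wᵀAw + 2 wᵀb + k)` with
`b = (T + 2(m₀ - c)M)h` and `k = hᵀTh + (m₀ - c)²`; the rank-one part `4 MhhᵀM` of `A` is the
square of the linear term `2 wᵀMh`. Since `Aμ = -b`, completing the square gives
`-(w - μ)ᵀA(w - μ) - k + μᵀAμ`, and after the translation `w ↦ w + μ` the Gaussian integral
`∫ exp(-wᵀAw) dw = π^{d/2} / √(det A)` follows from the one-dimensional one through the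
substitution `v = A^{1/2} w`, whose Jacobian is `det A^{1/2} = √(det A)`.
-/

open scoped Matrix
open MeasureTheory

namespace Matrix

open Real

variable {n : Type*} [Fintype n]

theorem IsSymm.dotProduct_mulVec_comm {α : Type*} [CommSemiring α] {X : Matrix n n α}
    (hX : X.IsSymm) (u v : n → α) : u ⬝ᵥ X *ᵥ v = v ⬝ᵥ X *ᵥ u := by
  rw [dotProduct_mulVec, ← mulVec_transpose, hX.eq, dotProduct_comm]

theorem IsSymm.dotProduct_mulVec_add_add {α : Type*} [CommRing α] {X : Matrix n n α}
    (hX : X.IsSymm) (u v : n → α) :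
    (u + v) ⬝ᵥ X *ᵥ (u + v) = u ⬝ᵥ X *ᵥ u + 2 * (u ⬝ᵥ X *ᵥ v) + v ⬝ᵥ X *ᵥ v := by
  rw [mulVec_add, dotProduct_add, add_dotProduct, add_dotProduct, hX.dotProduct_mulVec_comm v u]
  ring

theorem IsSymm.dotProduct_mulVec_sub_sub {α : Type*} [CommRing α] {X : Matrix n n α}
    (hX : X.IsSymm) (u v : n → α) :
    (u - v) ⬝ᵥ X *ᵥ (u - v) = u ⬝ᵥ X *ᵥ u - 2 * (u ⬝ᵥ X *ᵥ v) + v ⬝ᵥ X *ᵥ v := by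
  simpa [sub_eq_add_neg, mulVec_neg] using hX.dotProduct_mulVec_add_add u (-v)

theorem IsSymm.mul_vecMulVec_mul_self {α : Type*} [CommSemiring α] {M : Matrix n n α}
    (hM : M.IsSymm) (h : n → α) : M * vecMulVec h h * M = vecMulVec (M *ᵥ h) (M *ᵥ h) := by
  rw [mul_vecMulVec, vecMulVec_mul, ← mulVec_transpose, hM.eq]

theorem dotProduct_vecMulVec_self_mulVec {α : Type*} [CommSemiring α] (u w : n → α) :
    w ⬝ᵥ vecMulVec u u *ᵥ w = (w ⬝ᵥ u) ^ 2 := by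
  rw [vecMulVec_mulVec, op_smul_eq_smul, dotProduct_smul, smul_eq_mul, dotProduct_comm u, sq]

theorem integral_comp_mulVec [DecidableEq n] {E : Type*} [NormedAddCommGroup E]
    [NormedSpace ℝ E] {B : Matrix n n ℝ} (hB : B.det ≠ 0) (f : (n → ℝ) → E) :
    ∫ w, f (B *ᵥ w) = |B.det|⁻¹ • ∫ v, f v := by
  have hdet : LinearMap.det (toLin' B) ≠ 0 := by rwa [LinearMap.det_toLin']
  let e := (LinearMap.equivOfDetNeZero _ hdet).toContinuousLinearEquiv
  have hmap : Measure.map e volume = ENNReal.ofReal |B.det|⁻¹ • volume := by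
    rw [← abs_inv]
    exact Real.map_matrix_volume_pi_eq_smul_volume_pi hB
  calc ∫ w, f (B *ᵥ w) = ∫ v, f v ∂(Measure.map e volume) :=
        (e.toHomeomorph.measurableEmbedding.integral_map f).symm
    _ = |B.det|⁻¹ • ∫ v, f v := by
        rw [hmap, integral_smul_measure, ENNReal.toReal_ofReal (by positivity)]

theorem integral_exp_neg_dotProduct_self :
    ∫ v : n → ℝ, exp (-(v ⬝ᵥ v)) = √π ^ Fintype.card n := by
  have hprod (v : n → ℝ) : exp (-(v ⬝ᵥ v)) = ∏ i, exp (-1 * v i ^ 2) := by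
    rw [← exp_sum, dotProduct, ← Finset.sum_neg_distrib]
    simp [sq]
  simp_rw [hprod]
  rw [volume_pi, integral_fintype_prod_eq_pow (fun x : ℝ ↦ exp (-1 * x ^ 2)), integral_gaussian,
    div_one]

namespace PosDef

variable [DecidableEq n] {A : Matrix n n ℝ}

open scoped MatrixOrder in
theorem integral_exp_neg_dotProduct_mulVec (hA : A.PosDef) :
    ∫ w, exp (-(w ⬝ᵥ A *ᵥ w)) = √π ^ Fintype.card n / √A.det := by
  set B := CFC.sqrt A
  have hB : B.PosSemidef := nonneg_iff_posSemidef.mp (CFC.sqrt_nonneg A)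
  have hBB : B * B = A := CFC.sqrt_mul_sqrt_self A hA.posSemidef.nonneg
  have hdetB : B.det = √A.det := by simpa using hA.posSemidef.det_sqrt
  have hquad (w : n → ℝ) : w ⬝ᵥ A *ᵥ w = B *ᵥ w ⬝ᵥ B *ᵥ w := by
    rw [← hBB, ← mulVec_mulVec, dotProduct_mulVec, ← mulVec_transpose,
      isHermitian_iff_isSymm.mp hB.isHermitian]
  have hdetB_ne : B.det ≠ 0 := hdetB ▸ (sqrt_pos.mpr hA.det_pos).ne'
  simp_rw [hquad]
  rw [integral_comp_mulVec (f := fun v ↦ exp (-(v ⬝ᵥ v))) hdetB_ne,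
    integral_exp_neg_dotProduct_self, hdetB, abs_of_nonneg (sqrt_nonneg _), smul_eq_mul,
    inv_mul_eq_div]

theorem integral_exp_neg_quadratic (hA : A.PosDef) (μ : n → ℝ) (k : ℝ) :
    ∫ w, exp (-(w ⬝ᵥ A *ᵥ w - 2 * (w ⬝ᵥ A *ᵥ μ) + k)) =
      √π ^ Fintype.card n / √A.det * exp (-(k - μ ⬝ᵥ A *ᵥ μ)) := by
  have hA' : A.IsSymm := isHermitian_iff_isSymm.mp hA.isHermitian
  have hsquare (w : n → ℝ) : exp (-(w ⬝ᵥ A *ᵥ w - 2 * (w ⬝ᵥ A *ᵥ μ) + k)) =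
      exp (-(k - μ ⬝ᵥ A *ᵥ μ)) * exp (-((w - μ) ⬝ᵥ A *ᵥ (w - μ))) := by
    rw [← exp_add, hA'.dotProduct_mulVec_sub_sub]
    ring_nf
  simp_rw [hsquare]
  rw [integral_const_mul, integral_sub_right_eq_self (fun w ↦ exp (-(w ⬝ᵥ A *ᵥ w))),
    hA.integral_exp_neg_dotProduct_mulVec, mul_comm]

end PosDef

end Matrix

open Matrix in
theorem single_process_exponent_eq {n : Type*} [Fintype n] {S T M : Matrix n n ℝ}
    (hT : T.IsSymm) (hM : M.IsSymm) (h w : n → ℝ) (c : ℝ) :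
    -(w ⬝ᵥ S *ᵥ w) - (w + h) ⬝ᵥ T *ᵥ (w + h) -
        (w ⬝ᵥ M *ᵥ w - (w + h) ⬝ᵥ M *ᵥ (w + h) + c) ^ 2 =
      -(w ⬝ᵥ (S + T + 4 • vecMulVec (M *ᵥ h) (M *ᵥ h)) *ᵥ w +
        2 * (w ⬝ᵥ (T + (2 * (h ⬝ᵥ M *ᵥ h - c)) • M) *ᵥ h) +
        (h ⬝ᵥ T *ᵥ h + (h ⬝ᵥ M *ᵥ h - c) ^ 2)) := by
  simp only [add_mulVec, smul_mulVec, dotProduct_add, dotProduct_smul,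
    dotProduct_vecMulVec_self_mulVec, hT.dotProduct_mulVec_add_add, hM.dotProduct_mulVec_add_add,
    hM.dotProduct_mulVec_comm w h, smul_eq_mul]
  simp only [nsmul_eq_mul]
  ring

theorem single_process_gaussian_integral_general (d : ℕ)
    (S T M : Matrix (Fin d) (Fin d) ℝ) (hS : S.PosDef) (hT : T.PosDef)
    (hM : M.IsSymm) (h : Fin d → ℝ) (c : ℝ)
    (m₀ : ℝ) (hm₀ : m₀ = h ⬝ᵥ M.mulVec h)
    (A : Matrix (Fin d) (Fin d) ℝ)
    (hA : A = S + T + 4 • (M * Matrix.vecMulVec h h * M))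
    (μ : Fin d → ℝ)
    (hμ : μ = -(A⁻¹.mulVec ((T + (2 * (m₀ - c)) • M).mulVec h))) :
    (Real.sqrt (Real.pi ^ d))⁻¹ *
        ∫ w : Fin d → ℝ,
          Real.exp (-(w ⬝ᵥ S.mulVec w) - ((w + h) ⬝ᵥ T.mulVec (w + h)) -
            (w ⬝ᵥ M.mulVec w - (w + h) ⬝ᵥ M.mulVec (w + h) + c) ^ 2) =
      (Real.sqrt A.det)⁻¹ *
        Real.exp (-(h ⬝ᵥ T.mulVec h + (m₀ - c) ^ 2 - μ ⬝ᵥ A.mulVec μ)) := by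
  rw [hM.mul_vecMulVec_mul_self] at hA
  have hApd : A.PosDef := hA ▸ (hS.add hT).add_posSemidef
    ((Matrix.posSemidef_vecMulVec_self_star (M *ᵥ h)).smul (Nat.zero_le 4))
  have hAμ : A *ᵥ μ = -((T + (2 * (m₀ - c)) • M) *ᵥ h) := by
    rw [hμ, Matrix.mulVec_neg, Matrix.mulVec_mulVec,
      Matrix.mul_nonsing_inv _ (isUnit_iff_ne_zero.mpr hApd.det_pos.ne'), Matrix.one_mulVec]
  have hexponent (w : Fin d → ℝ) :
      -(w ⬝ᵥ S *ᵥ w) - (w + h) ⬝ᵥ T *ᵥ (w + h) -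
          (w ⬝ᵥ M *ᵥ w - (w + h) ⬝ᵥ M *ᵥ (w + h) + c) ^ 2 =
        -(w ⬝ᵥ A *ᵥ w - 2 * (w ⬝ᵥ A *ᵥ μ) + (h ⬝ᵥ T *ᵥ h + (m₀ - c) ^ 2)) := by
    rw [single_process_exponent_eq (Matrix.isHermitian_iff_isSymm.mp hT.isHermitian) hM, hAμ,
      dotProduct_neg, ← hA, ← hm₀]
    ring
  simp_rw [hexponent]
  have hsqrt : √(Real.pi ^ d) = √Real.pi ^ d := by
    rw [← Real.sqrt_sq (by positivity : 0 ≤ √Real.pi ^ d), ← pow_mul, mul_comm, pow_mul,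
      Real.sq_sqrt Real.pi_pos.le]
  rw [hApd.integral_exp_neg_quadratic, Fintype.card_fin, hsqrt]
  field_simp

/-- The Gaussian integral underlying Equation (13) of the paper: with
`m₀ = hᵀMh`, `A = S + T + 4MhhᵀM` and `μ = −A⁻¹(T + 2(m₀−c)M)h`,
`π^{−d/2} ∫ exp(−wᵀSw − (w+h)ᵀT(w+h) − (wᵀMw − (w+h)ᵀM(w+h) + c)²) dw
  = det(A)^{−1/2} exp(−(hᵀTh + (m₀−c)² − μᵀAμ))`. -/
theorem single_process_gaussian_integral (d : ℕ) (hd : 0 < d)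
    (S T M : Matrix (Fin d) (Fin d) ℝ) (hS : S.PosDef) (hT : T.PosDef)
    (hM : M.IsSymm) (h : Fin d → ℝ) (c : ℝ)
    (m₀ : ℝ) (hm₀ : m₀ = h ⬝ᵥ M.mulVec h)
    (A : Matrix (Fin d) (Fin d) ℝ)
    (hA : A = S + T + 4 • (M * Matrix.vecMulVec h h * M))
    (μ : Fin d → ℝ)
    (hμ : μ = -(A⁻¹.mulVec ((T + (2 * (m₀ - c)) • M).mulVec h))) :
    (Real.sqrt (Real.pi ^ d))⁻¹ *
        ∫ w : Fin d → ℝ,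
          Real.exp (-(w ⬝ᵥ S.mulVec w) - ((w + h) ⬝ᵥ T.mulVec (w + h)) -
            (w ⬝ᵥ M.mulVec w - (w + h) ⬝ᵥ M.mulVec (w + h) + c) ^ 2) =
      (Real.sqrt A.det)⁻¹ *
        Real.exp (-(h ⬝ᵥ T.mulVec h + (m₀ - c) ^ 2 - μ ⬝ᵥ A.mulVec μ)) :=
  single_process_gaussian_integral_general d S T M hS hT hM h c m₀ hm₀ A hA μ hμ
end
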